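/- arXiv:1406.1574 — 16 statements merged into one kernel-verified Lean document; each statement's English description precedes it below -/
import Mathlib

section
/- If L is a perfect Lie algebra, then for every triple derivation D of L and every x ∈ L, the commutator [D, ad x] = D∘(ad x) − (ad x)∘D is an inner derivation of L; consequently ad(L) is an ideal of the Lie algebra of triple derivations TDer(L). -/
def IsTripleDer (R : Type*) {L : Type*} [CommRing R] [LieRing L] [LieAlgebra R L]
    (D : L →ₗ[R] L) : Prop :=
  ∀ x y z : L, D ⁅⁅x, y⁆, z⁆ = ⁅⁅D x, y⁆, z⁆ + ⁅⁅x, D y⁆, z⁆ + ⁅⁅x, y⁆, D z⁆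

/-!
Applying the triple derivation identity to `⁅⁅a, b⁆, z⁆` gives
`⁅D, ad ⁅a, b⁆⁆ = ad (⁅D a, b⁆ + ⁅a, D b⁆)`. Since `x ↦ ⁅D, ad x⁆` is linear and a perfect
Lie algebra is spanned by brackets, `⁅D, ad x⁆` lies in `ad L` for every `x`.
-/

section

variable {R L : Type*} [CommRing R] [LieRing L] [LieAlgebra R L]

attribute [local instance] LieRing.ofAssociativeRing

theorem LieAlgebra.span_lie_eq_top_of_lie_top_top
    (hperf : ⁅(⊤ : LieIdeal R L), (⊤ : LieIdeal R L)⁆ = ⊤) :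
    Submodule.span R {m : L | ∃ a b : L, ⁅a, b⁆ = m} = ⊤ := by
  simpa [LieSubmodule.lieIdeal_oper_eq_linear_span'] using
    congrArg LieSubmodule.toSubmodule hperf

theorem IsTripleDer.lie_ad_lie {D : L →ₗ[R] L} (hD : IsTripleDer R D) (a b : L) :
    ⁅D, LieAlgebra.ad R L ⁅a, b⁆⁆ = LieAlgebra.ad R L (⁅D a, b⁆ + ⁅a, D b⁆) := by
  ext z
  simp only [LieHom.lie_apply, Module.End.lie_apply, LieAlgebra.ad_apply, hD a b z, add_lie]
  abel

theorem IsTripleDer.exists_lie_ad_eq_ad (hperf : ⁅(⊤ : LieIdeal R L), (⊤ : LieIdeal R L)⁆ = ⊤)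
    {D : Module.End R L} (hD : IsTripleDer R D) (x : L) :
    ∃ y : L, ⁅D, LieAlgebra.ad R L x⁆ = LieAlgebra.ad R L y := by
  let ad : L →ₗ[R] Module.End R L := LieAlgebra.ad R L
  suffices ⊤ ≤ (LinearMap.range ad).comap (LieAlgebra.ad R (Module.End R L) D ∘ₗ ad) by
    obtain ⟨y, hy⟩ := this (Submodule.mem_top (x := x))
    exact ⟨y, hy.symm⟩
  rw [← LieAlgebra.span_lie_eq_top_of_lie_top_top hperf, Submodule.span_le]
  rintro _ ⟨a, b, rfl⟩
  exact ⟨_, (hD.lie_ad_lie a b).symm⟩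

end

/-- For a perfect Lie algebra `L`, the commutator of a triple derivation with an inner
derivation `ad x` is again inner; hence `ad L` is an ideal of `TDer L`. -/
theorem tripleDer_bracket_ad_isInner (R L : Type*) [CommRing R] [LieRing L] [LieAlgebra R L]
    (hperf : ⁅(⊤ : LieIdeal R L), (⊤ : LieIdeal R L)⁆ = ⊤)
    (D : L →ₗ[R] L) (hD : IsTripleDer R D) (x : L) :
    ∃ y : L, D ∘ₗ (LieAlgebra.ad R L x : L →ₗ[R] L) - (LieAlgebra.ad R L x : L →ₗ[R] L) ∘ₗ D
      = LieAlgebra.ad R L y :=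
  hD.exists_lie_ad_eq_ad hperf x
end

section
/- Let L be a perfect Lie algebra with trivial center, and let D be a triple derivation of L. Then there is a well-defined R-linear map δ_D : L → L such that for every x ∈ L written as x = Σᵢ [x_{i1}, x_{i2}], one has δ_D(x) = Σᵢ ([D(x_{i1}), x_{i2}] + [x_{i1}, D(x_{i2})]); i.e., this value does not depend on the chosen expression of x as a sum of brackets. -/
/-!
`δ_D` is the linear map whose graph is the span of the pairs `(⁅a, b⁆, ⁅D a, b⁆ + ⁅a, D b⁆)`.
Perfectness makes the first projection of this span surjective. For it to be a graph, note
that the triple-derivation identity gives `⁅q, z⁆ = D ⁅p, z⁆ - ⁅p, D z⁆` for every pair `(p, q)`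
of the span; so `p = 0` forces `q` to be central, hence `q = 0`.
-/

namespace Submodule

variable {R E F : Type*} [Ring R] [AddCommGroup E] [Module R E] [AddCommGroup F] [Module R F]

theorem exists_linearMap_apply_fst_eq_snd {g : Submodule R (E × F)}
    (hg : ∀ p ∈ g, p.1 = 0 → p.2 = 0) (hfst : g.map (LinearMap.fst R E F) = ⊤) :
    ∃ f : E →ₗ[R] F, ∀ p ∈ g, f p.1 = p.2 := by
  refine ⟨g.toLinearPMap.toFun ∘ₗ (LinearEquiv.ofTop _ hfst).symm.toLinearMap, fun p hp => ?_⟩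
  have hp₁ : p.1 ∈ g.map (LinearMap.fst R E F) := hfst ▸ mem_top
  exact (existsUnique_from_graph (fun hx hx' => hg _ hx hx') hp₁).unique
    (g.mem_graph_toLinearPMap (fun x hx hx' => hg x hx hx') ⟨p.1, hp₁⟩) hp

end Submodule

section

variable {R L : Type*} [CommRing R] [LieRing L] [LieAlgebra R L]

theorem LieAlgebra.span_range_lie_eq_top
    (hperf : ⁅(⊤ : LieIdeal R L), (⊤ : LieIdeal R L)⁆ = ⊤) :
    Submodule.span R (Set.range fun ab : L × L => ⁅ab.1, ab.2⁆) = ⊤ := by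
  rw [eq_top_iff, ← LieSubmodule.top_toSubmodule (R := R) (L := L), ← hperf,
    LieSubmodule.lieIdeal_oper_eq_linear_span']
  refine Submodule.span_mono ?_
  rintro _ ⟨a, -, b, -, rfl⟩
  exact ⟨(a, b), rfl⟩

variable (R) in
def leibnizGraph (D : L →ₗ[R] L) : Submodule R (L × L) :=
  Submodule.span R (Set.range fun ab : L × L => (⁅ab.1, ab.2⁆, ⁅D ab.1, ab.2⁆ + ⁅ab.1, D ab.2⁆))

theorem map_fst_leibnizGraph (hperf : ⁅(⊤ : LieIdeal R L), (⊤ : LieIdeal R L)⁆ = ⊤)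
    (D : L →ₗ[R] L) : (leibnizGraph R D).map (LinearMap.fst R L L) = ⊤ := by
  rw [leibnizGraph, Submodule.map_span, ← Set.range_comp]
  exact LieAlgebra.span_range_lie_eq_top hperf

theorem sum_mem_leibnizGraph (D : L →ₗ[R] L) {n : ℕ} (a b : Fin n → L) :
    (∑ i, ⁅a i, b i⁆, ∑ i, (⁅D (a i), b i⁆ + ⁅a i, D (b i)⁆)) ∈ leibnizGraph R D := by
  rw [prod_mk_sum]
  exact Submodule.sum_mem _ fun i _ => Submodule.subset_span ⟨(a i, b i), rfl⟩

namespace IsTripleDer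

variable {D : L →ₗ[R] L}

theorem lie_snd_eq (hD : IsTripleDer R D) {p : L × L} (hp : p ∈ leibnizGraph R D) (z : L) :
    ⁅p.2, z⁆ = D ⁅p.1, z⁆ - ⁅p.1, D z⁆ := by
  induction hp using Submodule.span_induction with
  | mem p hp =>
    obtain ⟨⟨a, b⟩, rfl⟩ := hp
    rw [add_lie, hD]
    abel
  | zero => simp
  | add p q _ _ hp hq =>
    simp only [Prod.fst_add, Prod.snd_add, add_lie, map_add, hp, hq]
    abel
  | smul c p _ hp =>
    simp only [Prod.smul_fst, Prod.smul_snd, smul_lie, map_smul, hp, smul_sub]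

theorem snd_mem_center (hD : IsTripleDer R D) {p : L × L} (hp : p ∈ leibnizGraph R D)
    (h₁ : p.1 = 0) : p.2 ∈ LieAlgebra.center R L := fun z => by
  rw [← lie_skew, hD.lie_snd_eq hp, h₁, zero_lie, map_zero, zero_lie, sub_zero, neg_zero]

end IsTripleDer

end

/-- For a perfect centerless Lie algebra and a triple derivation `D`, there is a well-defined
linear map `δ_D` with `δ_D (∑ ⁅aᵢ, bᵢ⁆) = ∑ (⁅D aᵢ, bᵢ⁆ + ⁅aᵢ, D bᵢ⁆)`. -/
theorem exists_deltaD (R L : Type*) [CommRing R] [LieRing L] [LieAlgebra R L]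
    (hperf : ⁅(⊤ : LieIdeal R L), (⊤ : LieIdeal R L)⁆ = ⊤)
    (hZ : LieAlgebra.center R L = ⊥)
    (D : L →ₗ[R] L) (hD : IsTripleDer R D) :
    ∃ δ : L →ₗ[R] L, ∀ (x : L) (n : ℕ) (a b : Fin n → L),
      x = ∑ i, ⁅a i, b i⁆ →
      δ x = ∑ i, (⁅D (a i), b i⁆ + ⁅a i, D (b i)⁆) := by
  have hgraph : ∀ p ∈ leibnizGraph R D, p.1 = 0 → p.2 = 0 := fun p hp h₁ => by
    simpa [hZ] using hD.snd_mem_center hp h₁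
  obtain ⟨δ, hδ⟩ :=
    Submodule.exists_linearMap_apply_fst_eq_snd hgraph (map_fst_leibnizGraph hperf D)
  refine ⟨δ, fun x n a b hx => hx ▸ ?_⟩
  exact hδ _ (sum_mem_leibnizGraph D a b)
end

section
/- Let L be a perfect Lie algebra with trivial center and D a triple derivation of L. Then the induced map δ_D (defined on brackets by δ_D([a,b]) = [D a, b] + [a, D b]) is a derivation of L. -/
attribute [local instance] LieRing.ofAssociativeRing

namespace LieAlgebra

variable {R L : Type*} [CommRing R] [LieRing L] [LieAlgebra R L]

theorem ad_injective_of_center_eq_bot (hZ : center R L = ⊥) : Function.Injective (ad R L) := by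
  rw [← LieHom.ker_eq_bot, ad_ker_eq_self_module_ker, self_module_ker_eq_center, hZ]

theorem ad_map_lie_of_lie_ad_eq_ad {D : Module.End R L} {δ : L →ₗ[R] L}
    (hδ : ∀ x, ⁅D, ad R L x⁆ = ad R L (δ x)) (a b : L) :
    ad R L (δ ⁅a, b⁆) = ad R L (⁅δ a, b⁆ + ⁅a, δ b⁆) := by
  rw [← hδ, LieHom.map_lie, leibniz_lie, hδ, hδ, map_add, LieHom.map_lie, LieHom.map_lie]

end LieAlgebra

open LieAlgebra

theorem deltaD_isDer_general (R L : Type*) [CommRing R] [LieRing L] [LieAlgebra R L]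
    (hZ : LieAlgebra.center R L = ⊥)
    (D : L →ₗ[R] L)
    (δ : L →ₗ[R] L)
    (hδ : ∀ x : L, D ∘ₗ (LieAlgebra.ad R L x : L →ₗ[R] L)
        - (LieAlgebra.ad R L x : L →ₗ[R] L) ∘ₗ D = LieAlgebra.ad R L (δ x)) :
    ∀ a b : L, δ ⁅a, b⁆ = ⁅δ a, b⁆ + ⁅a, δ b⁆ := by
  have hcomm (x : L) : ⁅(D : Module.End R L), ad R L x⁆ = ad R L (δ x) := hδ x
  exact fun a b => ad_injective_of_center_eq_bot hZ (ad_map_lie_of_lie_ad_eq_ad hcomm a b)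

/-- For a perfect centerless Lie algebra and a triple derivation `D`, the induced map `δ_D`
(characterized by `[D, ad x] = ad (δ_D x)`) is a derivation of `L`. -/
theorem deltaD_isDer (R L : Type*) [CommRing R] [LieRing L] [LieAlgebra R L]
    (hperf : ⁅(⊤ : LieIdeal R L), (⊤ : LieIdeal R L)⁆ = ⊤)
    (hZ : LieAlgebra.center R L = ⊥)
    (D : L →ₗ[R] L) (hD : IsTripleDer R D)
    (δ : L →ₗ[R] L)
    (hδ : ∀ x : L, D ∘ₗ (LieAlgebra.ad R L x : L →ₗ[R] L)
        - (LieAlgebra.ad R L x : L →ₗ[R] L) ∘ₗ D = LieAlgebra.ad R L (δ x)) :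
    ∀ a b : L, δ ⁅a, b⁆ = ⁅δ a, b⁆ + ⁅a, δ b⁆ :=
  deltaD_isDer_general R L hZ D δ hδ
end

section
/- Let L be a perfect Lie algebra over a commutative ring R in which 2 is invertible. Then the centralizer of ad(L) in the Lie algebra of triple derivations TDer(L) is zero: if D is a triple derivation with D∘(ad x) = (ad x)∘D for all x ∈ L, then D = 0. In particular, the center of TDer(L) is zero. -/
/-!
A map `D` commuting with every `ad x` satisfies `D⁅a, b⁆ = ⁅a, D b⁆ = ⁅D a, b⁆`. Comparing this
with the triple derivation rule gives `2 • ⁅D⁅x, y⁆, z⁆ = 0`, so `D` maps `[L, L] = L` into the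
centre. Then `D⁅x, y⁆ = ⁅x, D y⁆ = 0`, and `D` vanishes on `[L, L] = L`.
-/

section

variable {R L : Type*} [CommRing R] [LieRing L] [LieAlgebra R L]

theorem LinearMap.eq_zero_of_forall_map_lie_eq_zero {M : Type*} [AddCommGroup M] [Module R M]
    (hperf : ⁅(⊤ : LieIdeal R L), (⊤ : LieIdeal R L)⁆ = ⊤) (f : L →ₗ[R] M)
    (hf : ∀ x y : L, f ⁅x, y⁆ = 0) : f = 0 := by
  have hle :
      LieSubmodule.toSubmodule ⁅(⊤ : LieIdeal R L), (⊤ : LieIdeal R L)⁆ ≤ LinearMap.ker f := by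
    rw [LieSubmodule.lieIdeal_oper_eq_linear_span', Submodule.span_le]
    rintro _ ⟨x, -, y, -, rfl⟩
    exact hf x y
  rw [hperf, LieSubmodule.top_toSubmodule, top_le_iff, LinearMap.ker_eq_top] at hle
  exact hle

variable {D : L →ₗ[R] L}
  (hcomm : ∀ x : L, D ∘ₗ (LieAlgebra.ad R L x : L →ₗ[R] L)
    = (LieAlgebra.ad R L x : L →ₗ[R] L) ∘ₗ D)
include hcomm

theorem map_lie_eq_lie_map_of_comp_ad_eq (a b : L) : D ⁅a, b⁆ = ⁅a, D b⁆ := by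
  simpa using LinearMap.congr_fun (hcomm a) b

theorem lie_map_eq_lie_map_of_comp_ad_eq (a b : L) : ⁅D a, b⁆ = ⁅a, D b⁆ := by
  rw [← lie_skew, ← map_lie_eq_lie_map_of_comp_ad_eq hcomm, ← map_neg, lie_skew,
    map_lie_eq_lie_map_of_comp_ad_eq hcomm]

theorem IsTripleDer.lie_map_lie_eq_zero_of_comp_ad_eq [Invertible (2 : R)] (hD : IsTripleDer R D)
    (x y z : L) : ⁅D ⁅x, y⁆, z⁆ = 0 := by
  have h := hD x y z
  rw [map_lie_eq_lie_map_of_comp_ad_eq hcomm ⁅x, y⁆ z, lie_map_eq_lie_map_of_comp_ad_eq hcomm x y]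
    at h
  rw [map_lie_eq_lie_map_of_comp_ad_eq hcomm, ← (isUnit_of_invertible (2 : R)).smul_eq_zero,
    two_smul]
  linear_combination (norm := abel) -h

end

/-- If `1/2 ∈ R` and `L` is perfect, then the centralizer of `ad L` in `TDer L` is zero. -/
theorem centralizer_ad_in_TDer_eq_zero (R L : Type*) [CommRing R] [LieRing L] [LieAlgebra R L]
    [Invertible (2 : R)]
    (hperf : ⁅(⊤ : LieIdeal R L), (⊤ : LieIdeal R L)⁆ = ⊤)
    (D : L →ₗ[R] L) (hD : IsTripleDer R D)
    (hcomm : ∀ x : L, D ∘ₗ (LieAlgebra.ad R L x : L →ₗ[R] L)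
        = (LieAlgebra.ad R L x : L →ₗ[R] L) ∘ₗ D) :
    D = 0 := by
  have hcentral (z w : L) : ⁅z, D w⁆ = 0 := by
    refine LinearMap.congr_fun (LinearMap.eq_zero_of_forall_map_lie_eq_zero hperf
      ((LieAlgebra.ad R L z : L →ₗ[R] L) ∘ₗ D) fun x y => ?_) w
    change ⁅z, D ⁅x, y⁆⁆ = 0
    rw [← lie_skew, hD.lie_map_lie_eq_zero_of_comp_ad_eq hcomm, neg_zero]
  refine LinearMap.eq_zero_of_forall_map_lie_eq_zero hperf D fun x y => ?_
  rw [map_lie_eq_lie_map_of_comp_ad_eq hcomm, hcentral]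
end

section
/- Let L be a Lie algebra over a commutative ring R containing 1/2, with [L,L] = L and Z(L) = 0. Then every triple derivation of L is a derivation, i.e., TDer(L) = Der(L). -/
section

variable {R L : Type*} [CommRing R] [LieRing L] [LieAlgebra R L]

theorem LieAlgebra.mem_center_of_forall_lie_lie_eq_zero
    (hperf : ⁅(⊤ : LieIdeal R L), (⊤ : LieIdeal R L)⁆ = ⊤) {m : L}
    (hm : ∀ u v : L, ⁅m, ⁅u, v⁆⁆ = 0) : m ∈ LieAlgebra.center R L := by
  have hspan :
      Submodule.span R {⁅u, v⁆ | (u ∈ (⊤ : LieIdeal R L)) (v ∈ (⊤ : LieIdeal R L))} = ⊤ := by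
    rw [← LieSubmodule.lieIdeal_oper_eq_linear_span', hperf, LieSubmodule.top_toSubmodule]
  have hker : LieAlgebra.ad R L m = 0 :=
    LinearMap.ext_on hspan (by rintro _ ⟨u, -, v, -, rfl⟩; exact hm u v)
  rw [← LieAlgebra.self_module_ker_eq_center, LieModule.mem_ker]
  exact LinearMap.congr_fun hker

def derivDefect (D : L →ₗ[R] L) (x y : L) : L :=
  D ⁅x, y⁆ - ⁅D x, y⁆ - ⁅x, D y⁆

theorem derivDefect_swap (D : L →ₗ[R] L) (x y : L) : derivDefect D y x = -derivDefect D x y := by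
  simp only [derivDefect, ← lie_skew x y, map_neg, ← lie_skew (D x) y, ← lie_skew x (D y)]
  abel

namespace IsTripleDer

variable {D : L →ₗ[R] L} (hD : IsTripleDer R D)
include hD

theorem derivDefect_lie_left (p q t : L) :
    derivDefect D ⁅p, q⁆ t = -⁅derivDefect D p q, t⁆ := by
  simp only [derivDefect, sub_lie, hD p q t]
  abel

theorem lie_derivDefect_lie (x y z w : L) :
    ⁅derivDefect D x y, ⁅z, w⁆⁆ = ⁅⁅x, y⁆, derivDefect D z w⁆ := by
  have h := derivDefect_swap D ⁅x, y⁆ ⁅z, w⁆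
  rw [hD.derivDefect_lie_left, hD.derivDefect_lie_left, lie_skew, neg_neg] at h
  exact h.symm

theorem lie_derivDefect_lie_lie_comm (x y u v z : L) :
    ⁅⁅derivDefect D x y, ⁅u, v⁆⁆, z⁆ = ⁅z, ⁅derivDefect D x y, ⁅u, v⁆⁆⁆ := by
  have hxy := hD.derivDefect_lie_left x y z
  have huv := hD.derivDefect_lie_left u v z
  calc ⁅⁅derivDefect D x y, ⁅u, v⁆⁆, z⁆ = ⁅⁅⁅x, y⁆, derivDefect D u v⁆, z⁆ := by
        rw [hD.lie_derivDefect_lie]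
    _ = ⁅⁅x, y⁆, ⁅derivDefect D u v, z⁆⁆ - ⁅derivDefect D u v, ⁅⁅x, y⁆, z⁆⁆ := by
        rw [leibniz_lie]; abel
    _ = ⁅derivDefect D x y, ⁅z, ⁅u, v⁆⁆⁆ - ⁅⁅derivDefect D x y, z⁆, ⁅u, v⁆⁆ := by
        rw [hD.lie_derivDefect_lie x y, hD.lie_derivDefect_lie u v, derivDefect_swap D ⁅u, v⁆ z,
          huv, hxy, neg_neg, lie_neg, lie_skew]
    _ = ⁅z, ⁅derivDefect D x y, ⁅u, v⁆⁆⁆ := by rw [leibniz_lie]; abel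

theorem lie_derivDefect_lie_mem_center [Invertible (2 : R)] (x y u v : L) :
    ⁅derivDefect D x y, ⁅u, v⁆⁆ ∈ LieAlgebra.center R L := by
  rw [← LieAlgebra.self_module_ker_eq_center, LieModule.mem_ker]
  intro z
  have h2 : (2 : R) • ⁅⁅derivDefect D x y, ⁅u, v⁆⁆, z⁆ = 0 := by
    rw [two_smul]
    nth_rw 2 [hD.lie_derivDefect_lie_lie_comm]
    rw [← lie_skew, neg_add_cancel]
  rw [← invOf_smul_smul (2 : R) ⁅⁅derivDefect D x y, ⁅u, v⁆⁆, z⁆, h2, smul_zero]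

end IsTripleDer

end

/-- If `1/2 ∈ R`, `L` is perfect with zero center, then every triple derivation of `L`
is a derivation: `TDer L = Der L`. -/
theorem tripleDer_eq_der (R L : Type*) [CommRing R] [LieRing L] [LieAlgebra R L]
    [Invertible (2 : R)]
    (hperf : ⁅(⊤ : LieIdeal R L), (⊤ : LieIdeal R L)⁆ = ⊤)
    (hZ : LieAlgebra.center R L = ⊥)
    (D : L →ₗ[R] L) (hD : IsTripleDer R D) :
    ∀ x y : L, D ⁅x, y⁆ = ⁅D x, y⁆ + ⁅x, D y⁆ := by
  intro x y
  have hcomm : ∀ u v : L, ⁅derivDefect D x y, ⁅u, v⁆⁆ = 0 := fun u v => by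
    simpa only [hZ, LieSubmodule.mem_bot] using hD.lie_derivDefect_lie_mem_center x y u v
  have hdefect : derivDefect D x y = 0 := by
    simpa only [hZ, LieSubmodule.mem_bot] using LieAlgebra.mem_center_of_forall_lie_lie_eq_zero hperf hcomm
  rwa [derivDefect, sub_sub, sub_eq_zero] at hdefect
end

section
/- Let L be a perfect Lie algebra. If D is a triple derivation of the Lie algebra TDer(L) (triple derivations of L under the commutator bracket), then D maps ad(L) into ad(L). -/
attribute [local instance 100] LieRing.ofAssociativeRing

/-- The triple derivations of a Lie algebra `L`, as a Lie subalgebra of `Module.End R L`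
(with the commutator bracket). -/
def TDer (R L : Type*) [CommRing R] [LieRing L] [LieAlgebra R L] :
    LieSubalgebra R (Module.End R L) where
  carrier := {D | ∀ x y z : L, D ⁅⁅x, y⁆, z⁆ = ⁅⁅D x, y⁆, z⁆ + ⁅⁅x, D y⁆, z⁆ + ⁅⁅x, y⁆, D z⁆}
  add_mem' := by
    intro f g hf hg x y z
    simp only [LinearMap.add_apply, hf x y z, hg x y z, add_lie, lie_add]
    abel
  zero_mem' := by intro x y z; simp
  smul_mem' := by
    intro c f hf x y z
    simp only [LinearMap.smul_apply, hf x y z, smul_add, lie_smul, smul_lie]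
  lie_mem' := by
    intro f g hf hg x y z
    have hf' : ∀ x y z : L, f ⁅⁅x, y⁆, z⁆ = ⁅⁅f x, y⁆, z⁆ + ⁅⁅x, f y⁆, z⁆ + ⁅⁅x, y⁆, f z⁆ := hf
    have hg' : ∀ x y z : L, g ⁅⁅x, y⁆, z⁆ = ⁅⁅g x, y⁆, z⁆ + ⁅⁅x, g y⁆, z⁆ + ⁅⁅x, y⁆, g z⁆ := hg
    simp only [Ring.lie_def, LinearMap.sub_apply, Module.End.mul_apply, hf', hg', map_add]
    simp only [add_lie, lie_add, sub_lie, lie_sub, smul_lie, lie_smul, neg_smul, one_smul,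
      neg_lie, lie_neg]
    abel

theorem ad_mem_TDer (R L : Type*) [CommRing R] [LieRing L] [LieAlgebra R L] (a : L) :
    (LieAlgebra.ad R L a : Module.End R L) ∈ TDer R L := by
  intro x y z
  simp only [LieAlgebra.ad_apply]
  rw [leibniz_lie a ⁅x, y⁆ z, leibniz_lie a x y, add_lie]

/-! For a triple derivation `f` and `c d : L`, `[f, ad [c,d]] = ad ([f c, d] + [c, f d])`; as a
perfect `L` is spanned by brackets, `ad L` is therefore an ideal of `TDer L`. Perfectness also
gives `L = [L, [L, L]]`, and `ad [x, [y, z]] = -[[ad y, ad z], ad x]`: expanding `D` of this by the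
triple-derivation rule yields three brackets each having a factor in the ideal `ad L`. -/

section Perfect

variable {R L : Type*} [CommRing R] [LieRing L] [LieAlgebra R L]

theorem Submodule.eq_top_of_lie_mem (hperf : ⁅(⊤ : LieIdeal R L), (⊤ : LieIdeal R L)⁆ = ⊤)
    {N : Submodule R L} (h : ∀ x y : L, ⁅x, y⁆ ∈ N) : N = ⊤ := by
  rw [eq_top_iff, ← LieSubmodule.top_toSubmodule (R := R) (L := L) (M := L), ← hperf,
    LieSubmodule.lieIdeal_oper_eq_linear_span', Submodule.span_le]
  rintro _ ⟨x, -, y, -, rfl⟩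
  exact h x y

theorem Submodule.eq_top_of_lie_lie_mem
    (hperf : ⁅(⊤ : LieIdeal R L), (⊤ : LieIdeal R L)⁆ = ⊤) {N : Submodule R L} (h : ∀ x y z : L, ⁅x, ⁅y, z⁆⁆ ∈ N) : N = ⊤ := by
  have hbracket : ⨅ x : L, N.comap (LieAlgebra.ad R L x) = ⊤ :=
    Submodule.eq_top_of_lie_mem hperf fun y z ↦ Submodule.mem_iInf _ |>.mpr fun x ↦ h x y z
  refine Submodule.eq_top_of_lie_mem hperf fun x w ↦ ?_
  have hw : w ∈ ⨅ x : L, N.comap (LieAlgebra.ad R L x) := hbracket ▸ Submodule.mem_top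
  exact (Submodule.mem_iInf _).mp hw x

end Perfect

section AdTDer

variable (R L : Type*) [CommRing R] [LieRing L] [LieAlgebra R L]

def adTDer : L →ₗ⁅R⁆ TDer R L where
  __ := (LieAlgebra.ad R L).toLinearMap.codRestrict (TDer R L).toSubmodule (ad_mem_TDer R L)
  map_lie' {x y} := Subtype.ext <| (LieAlgebra.ad R L).map_lie x y

variable {R L}

theorem coe_adTDer_apply (x : L) : (adTDer R L x : Module.End R L) = LieAlgebra.ad R L x := rfl

theorem lie_adTDer_lie (f : TDer R L) (c d : L) :
    ⁅f, adTDer R L ⁅c, d⁆⁆ =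
      adTDer R L (⁅(f : Module.End R L) c, d⁆ + ⁅c, (f : Module.End R L) d⁆) := by
  ext z
  have hf := f.2 c d z
  simp only [LieSubalgebra.coe_bracket, Ring.lie_def, coe_adTDer_apply, LinearMap.sub_apply,
    Module.End.mul_apply, LieAlgebra.ad_apply, hf, add_lie]
  abel

theorem lie_adTDer_mem_range (hperf : ⁅(⊤ : LieIdeal R L), (⊤ : LieIdeal R L)⁆ = ⊤)
    (f : TDer R L) (z : L) :
    ⁅f, adTDer R L z⁆ ∈ LinearMap.range (adTDer R L : L →ₗ[R] TDer R L) := by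
  have hN : ((LinearMap.range (adTDer R L : L →ₗ[R] TDer R L)).comap
      (LieAlgebra.ad R (TDer R L) f ∘ₗ (adTDer R L : L →ₗ[R] TDer R L))) = ⊤ :=
    Submodule.eq_top_of_lie_mem hperf fun c d ↦ ⟨_, (lie_adTDer_lie f c d).symm⟩
  exact (hN ▸ Submodule.mem_top : z ∈ _)

end AdTDer

/-- A triple derivation of `TDer L` maps `ad L` into `ad L`, when `L` is perfect. -/
theorem tripleDer_of_TDer_maps_ad_into_ad (R L : Type*) [CommRing R] [LieRing L]
    [LieAlgebra R L]
    (hperf : ⁅(⊤ : LieIdeal R L), (⊤ : LieIdeal R L)⁆ = ⊤)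
    (D : ↥(TDer R L) →ₗ[R] ↥(TDer R L))
    (hD : ∀ d₁ d₂ d₃ : ↥(TDer R L),
      D ⁅⁅d₁, d₂⁆, d₃⁆ = ⁅⁅D d₁, d₂⁆, d₃⁆ + ⁅⁅d₁, D d₂⁆, d₃⁆ + ⁅⁅d₁, d₂⁆, D d₃⁆) :
    ∀ x : L, ∃ y : L,
      (↑(D ⟨LieAlgebra.ad R L x, ad_mem_TDer R L x⟩) : Module.End R L)
        = LieAlgebra.ad R L y := by
  set ad := (adTDer R L : L →ₗ[R] TDer R L)
  have hideal := lie_adTDer_mem_range hperf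
  have hN : (LinearMap.range ad).comap (D ∘ₗ ad) = ⊤ := by
    refine Submodule.eq_top_of_lie_lie_mem hperf fun x y z ↦ ?_
    have hexpand : ad ⁅x, ⁅y, z⁆⁆ = -⁅⁅ad y, ad z⁆, ad x⁆ := by
      simp only [ad, LieHom.coe_toLinearMap, LieHom.map_lie, lie_skew]
    rw [Submodule.mem_comap, LinearMap.comp_apply, hexpand, map_neg, hD]
    refine neg_mem (add_mem (add_mem (hideal _ x) (hideal _ x)) ?_)
    have hyz : ⁅ad y, ad z⁆ = ad ⁅y, z⁆ := (LieHom.map_lie _ y z).symm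
    rw [← lie_skew, hyz]
    exact neg_mem (hideal _ _)
  intro x
  obtain ⟨y, hy⟩ : D (ad x) ∈ LinearMap.range ad := (hN ▸ Submodule.mem_top : x ∈ _)
  exact ⟨y, congrArg Subtype.val hy.symm⟩
end

section
/- Let R contain 1/2 and L be a perfect Lie algebra over R with trivial center. If D is a triple derivation of TDer(L) such that D vanishes on ad(L), then D = 0. -/
attribute [local instance 100] LieRing.ofAssociativeRing

/-! For `d ∈ TDer L` the commutator `⁅d, ad ⁅a, b⁆⁆` is the inner derivation
`ad (⁅d a, b⁆ + ⁅a, d b⁆)`. Applying the identity of `D` to `(ad a, ad b, d)`, all terms but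
one involve `D` of an inner derivation and vanish, leaving `⁅ad ⁅a, b⁆, D d⁆ = 0`; as `L` is
perfect, `E = D d` commutes with all of `ad L`. Such an `E` satisfies
`E ⁅x, y⁆ = ⁅E x, y⁆ = ⁅x, E y⁆`, so its own triple-derivation identity collapses to
`2 • ⁅E ⁅x, y⁆, z⁆ = 0`. Hence `E` maps brackets into the centre, which is trivial, and
perfectness again gives `E = 0`. -/

namespace LieAlgebra

variable {R L M : Type*} [CommRing R] [LieRing L] [LieAlgebra R L] [AddCommGroup M] [Module R M]

theorem span_lie_eq_top_of_perfect (hperf : ⁅(⊤ : LieIdeal R L), (⊤ : LieIdeal R L)⁆ = ⊤) :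
    Submodule.span R {z : L | ∃ x y : L, ⁅x, y⁆ = z} = ⊤ := by
  have h := congrArg LieSubmodule.toSubmodule hperf
  rw [LieSubmodule.lieIdeal_oper_eq_linear_span'] at h
  simpa using h

theorem linearMap_ext_of_perfect (hperf : ⁅(⊤ : LieIdeal R L), (⊤ : LieIdeal R L)⁆ = ⊤)
    {f g : L →ₗ[R] M} (h : ∀ x y : L, f ⁅x, y⁆ = g ⁅x, y⁆) : f = g :=
  LinearMap.ext_on (span_lie_eq_top_of_perfect hperf) (by rintro _ ⟨x, y, rfl⟩; exact h x y)

end LieAlgebra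

section TripleDerivation

open LieAlgebra

variable {R L : Type*} [CommRing R] [LieRing L] [LieAlgebra R L]

theorem lie_ad_lie_eq_ad_of_mem_TDer {d : Module.End R L} (hd : d ∈ TDer R L) (a b : L) :
    ⁅d, ad R L ⁅a, b⁆⁆ = ad R L (⁅d a, b⁆ + ⁅a, d b⁆) := by
  ext z
  have hd' : d ⁅⁅a, b⁆, z⁆ = ⁅⁅d a, b⁆, z⁆ + ⁅⁅a, d b⁆, z⁆ + ⁅⁅a, b⁆, d z⁆ := hd a b z
  simp only [Ring.lie_def, LinearMap.sub_apply, Module.End.mul_apply, ad_apply, hd', add_lie]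
  abel

theorem apply_lie_mem_center_of_mem_TDer [Invertible (2 : R)] {E : Module.End R L}
    (hE : E ∈ TDer R L) (hcomm : ∀ x, Commute E (ad R L x)) (x y : L) :
    E ⁅x, y⁆ ∈ center R L := by
  have hlie : ∀ w z, E ⁅w, z⁆ = ⁅w, E z⁆ := fun w z => LinearMap.congr_fun (hcomm w).eq z
  have hleft : ⁅E x, y⁆ = E ⁅x, y⁆ := by rw [← lie_skew, ← hlie, ← map_neg, lie_skew]
  refine (LieModule.mem_maxTrivSubmodule R L L _).mpr fun z => ?_
  have htwo : (2 : R) • ⁅E ⁅x, y⁆, z⁆ = 0 := by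
    have h := hE x y z
    rw [hlie, hleft, ← hlie x y] at h
    rw [two_smul]
    exact add_eq_right.mp h.symm
  rw [← lie_skew, (isUnit_of_invertible (2 : R)).smul_eq_zero.mp htwo, neg_zero]

theorem eq_zero_of_mem_TDer_of_commute_ad [Invertible (2 : R)]
    (hperf : ⁅(⊤ : LieIdeal R L), (⊤ : LieIdeal R L)⁆ = ⊤) (hZ : center R L = ⊥)
    {E : Module.End R L} (hE : E ∈ TDer R L) (hcomm : ∀ x, Commute E (ad R L x)) : E = 0 :=
  linearMap_ext_of_perfect hperf fun x y => by
    simpa [hZ] using apply_lie_mem_center_of_mem_TDer hE hcomm x y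

theorem commute_ad_lie_of_tripleDer_vanishing_on_ad (D : ↥(TDer R L) →ₗ[R] ↥(TDer R L))
    (hD : ∀ d₁ d₂ d₃ : ↥(TDer R L),
      D ⁅⁅d₁, d₂⁆, d₃⁆ = ⁅⁅D d₁, d₂⁆, d₃⁆ + ⁅⁅d₁, D d₂⁆, d₃⁆ + ⁅⁅d₁, d₂⁆, D d₃⁆)
    (hvanish : ∀ x : L, D ⟨ad R L x, ad_mem_TDer R L x⟩ = 0) (d : TDer R L) (a b : L) :
    Commute (D d : Module.End R L) (ad R L ⁅a, b⁆) := by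
  let adT (x : L) : TDer R L := ⟨ad R L x, ad_mem_TDer R L x⟩
  have hinner : ⁅⁅adT a, adT b⁆, d⁆ =
      adT (-(⁅(d : Module.End R L) a, b⁆ + ⁅a, (d : Module.End R L) b⁆)) := by
    apply Subtype.ext
    rw [LieSubalgebra.coe_bracket, LieSubalgebra.coe_bracket, ← LieHom.map_lie, ← lie_skew,
      lie_ad_lie_eq_ad_of_mem_TDer d.2, ← map_neg]
  have h := hD (adT a) (adT b) d
  simp only [hinner, adT, hvanish, zero_lie, lie_zero, zero_add] at h
  have h' := congrArg Subtype.val h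
  rw [LieSubalgebra.coe_bracket, LieSubalgebra.coe_bracket, ← LieHom.map_lie] at h'
  exact (commute_iff_lie_eq.mpr h'.symm).symm

end TripleDerivation

/-- If `1/2 ∈ R`, `L` is perfect with trivial center, and a triple derivation `D` of
`TDer L` vanishes on `ad L`, then `D = 0`. -/
theorem tripleDer_of_TDer_vanishing_on_ad (R L : Type*) [CommRing R] [LieRing L]
    [LieAlgebra R L] [Invertible (2 : R)]
    (hperf : ⁅(⊤ : LieIdeal R L), (⊤ : LieIdeal R L)⁆ = ⊤)
    (hZ : LieAlgebra.center R L = ⊥)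
    (D : ↥(TDer R L) →ₗ[R] ↥(TDer R L))
    (hD : ∀ d₁ d₂ d₃ : ↥(TDer R L),
      D ⁅⁅d₁, d₂⁆, d₃⁆ = ⁅⁅D d₁, d₂⁆, d₃⁆ + ⁅⁅d₁, D d₂⁆, d₃⁆ + ⁅⁅d₁, d₂⁆, D d₃⁆)
    (hvanish : ∀ x : L, D ⟨LieAlgebra.ad R L x, ad_mem_TDer R L x⟩ = 0) :
    D = 0 := by
  refine LinearMap.ext fun d => Subtype.ext ?_
  let E : Module.End R L := D d
  have hcomm : ∀ x, Commute E (LieAlgebra.ad R L x) := by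
    have h := LieAlgebra.linearMap_ext_of_perfect hperf
      (f := LinearMap.mulLeft R E ∘ₗ (LieAlgebra.ad R L : L →ₗ[R] Module.End R L))
      (g := LinearMap.mulRight R E ∘ₗ (LieAlgebra.ad R L : L →ₗ[R] Module.End R L))
      fun a b => (commute_ad_lie_of_tripleDer_vanishing_on_ad D hD hvanish d a b).eq
    exact fun x => LinearMap.congr_fun h x
  exact eq_zero_of_mem_TDer_of_commute_ad hperf hZ (D d).2 hcomm
end

section
/- Let R contain 1/2 and L be a perfect Lie algebra over R with trivial center. If D is a triple derivation of the derivation algebra Der(L), then there exists a derivation d ∈ Der(L) such that D(ad x) = ad(d x) for all x ∈ L. -/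
/-!
The range `ad L` is an ideal of `Der L` and `L = ⁅⁅L, L⁆, L⁆`, so applying the triple-derivation
identity to `ad a, ad b, ad c` shows that `D` maps `ad L` into itself. As `ad` is injective, `D`
restricts along `ad` to a linear map `d` on `L`, which is a triple derivation of `L`.

A triple derivation `f` of a perfect Lie algebra with trivial center is a derivation: its defect
`E x y = f ⁅x, y⁆ - ⁅f x, y⁆ - ⁅x, f y⁆` satisfies `E x ⁅a, b⁆ = ⁅E a b, x⁆`, and together with
the Jacobi identity this forces `2 • ⁅⁅x, y⁆, E a b⁆ = 0`, so `E a b` is central.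
-/

theorem LinearMap.exists_comp_eq_of_range_le {R M N P : Type*} [CommRing R]
    [AddCommGroup M] [Module R M] [AddCommGroup N] [Module R N] [AddCommGroup P] [Module R P]
    {A : M →ₗ[R] N} (hA : Function.Injective A) {g : P →ₗ[R] N} (hg : range g ≤ range A) :
    ∃ d : P →ₗ[R] M, A ∘ₗ d = g :=
  ⟨(LinearEquiv.ofInjective A hA).symm ∘ₗ g.codRestrict (range A) fun x ↦ hg ⟨x, rfl⟩, by
    ext x
    simp⟩

namespace LieAlgebra

variable {R L : Type*} [CommRing R] [LieRing L] [LieAlgebra R L]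

theorem submodule_eq_top_of_lie_mem (hperf : ⁅(⊤ : LieIdeal R L), (⊤ : LieIdeal R L)⁆ = ⊤)
    {N : Submodule R L} (hN : ∀ a b : L, ⁅a, b⁆ ∈ N) : N = ⊤ := by
  rw [eq_top_iff, ← LieSubmodule.top_toSubmodule (R := R) (L := L) (M := L), ← hperf,
    LieSubmodule.lieIdeal_oper_eq_linear_span, Submodule.span_le]
  rintro _ ⟨a, b, rfl⟩
  exact hN a b

theorem submodule_eq_top_of_lie_lie_mem
    (hperf : ⁅(⊤ : LieIdeal R L), (⊤ : LieIdeal R L)⁆ = ⊤)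
    {N : Submodule R L} (hN : ∀ a b c : L, ⁅⁅a, b⁆, c⁆ ∈ N) : N = ⊤ := by
  refine submodule_eq_top_of_lie_mem hperf fun x c ↦ ?_
  have : N.comap ((ad R L : L →ₗ[R] Module.End R L).flip c) = ⊤ :=
    submodule_eq_top_of_lie_mem hperf fun a b ↦ hN a b c
  simpa using this.ge (Submodule.mem_top (x := x))

theorem eq_zero_of_lie_lie_eq_zero (hperf : ⁅(⊤ : LieIdeal R L), (⊤ : LieIdeal R L)⁆ = ⊤)
    (hZ : center R L = ⊥) {z : L} (hz : ∀ a b : L, ⁅⁅a, b⁆, z⁆ = 0) : z = 0 := by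
  have hker : LinearMap.ker ((ad R L : L →ₗ[R] Module.End R L).flip z) = ⊤ :=
    submodule_eq_top_of_lie_mem hperf fun a b ↦ by simpa using hz a b
  have hcenter : z ∈ center R L := by
    rw [LieModule.mem_maxTrivSubmodule]
    intro w
    simpa using hker.ge (Submodule.mem_top (x := w))
  simpa [hZ] using hcenter

end LieAlgebra

namespace LinearMap

variable {R L : Type*} [CommRing R] [LieRing L] [LieAlgebra R L]

def IsLieTripleDerivation (f : L →ₗ[R] L) : Prop :=
  ∀ a b c : L, f ⁅⁅a, b⁆, c⁆ = ⁅⁅f a, b⁆, c⁆ + ⁅⁅a, f b⁆, c⁆ + ⁅⁅a, b⁆, f c⁆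

def lieDerivDefect (f : L →ₗ[R] L) (x y : L) : L := f ⁅x, y⁆ - ⁅f x, y⁆ - ⁅x, f y⁆

theorem lieDerivDefect_swap (f : L →ₗ[R] L) (x y : L) :
    f.lieDerivDefect y x = -f.lieDerivDefect x y := by
  simp only [lieDerivDefect, ← lie_skew x y, ← lie_skew (f x) y, ← lie_skew x (f y), map_neg]
  abel

theorem lieDerivDefect_cocycle (f : L →ₗ[R] L) (x y z : L) :
    ⁅f.lieDerivDefect x y, z⁆ - ⁅x, f.lieDerivDefect y z⁆ + ⁅y, f.lieDerivDefect x z⁆ =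
      f.lieDerivDefect x ⁅y, z⁆ - f.lieDerivDefect ⁅x, y⁆ z - f.lieDerivDefect y ⁅x, z⁆ := by
  simp only [lieDerivDefect, lie_lie, map_sub, lie_sub, sub_lie]
  abel

namespace IsLieTripleDerivation

variable {f : L →ₗ[R] L}

theorem of_comp_eq {L' : Type*} [LieRing L'] [LieAlgebra R L'] {φ : L →ₗ⁅R⁆ L'}
    (hφ : Function.Injective φ) {D : L' →ₗ[R] L'} (hD : D.IsLieTripleDerivation)
    (h : (φ : L →ₗ[R] L') ∘ₗ f = D ∘ₗ φ) : f.IsLieTripleDerivation := by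
  have hφf (x : L) : φ (f x) = D (φ x) := LinearMap.congr_fun h x
  intro a b c
  apply hφ
  simp only [map_add, LieHom.map_lie, hφf, hD _ _ _]

theorem range_comp_ad_le (hperf : ⁅(⊤ : LieIdeal R L), (⊤ : LieIdeal R L)⁆ = ⊤)
    {D : LieDerivation R L L →ₗ[R] LieDerivation R L L} (hD : D.IsLieTripleDerivation) :
    range (D ∘ₗ (LieDerivation.ad R L : L →ₗ[R] LieDerivation R L L)) ≤
      range (LieDerivation.ad R L : L →ₗ[R] LieDerivation R L L) := by
  set I := (LieDerivation.ad R L).idealRange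
  have hI (x : L) : LieDerivation.ad R L x ∈ I := (LieDerivation.ad R L).mem_idealRange x
  have hDI : (I : Submodule R (LieDerivation R L L)).comap
      (D ∘ₗ (LieDerivation.ad R L : L →ₗ[R] LieDerivation R L L)) = ⊤ := by
    refine LieAlgebra.submodule_eq_top_of_lie_lie_mem hperf fun a b c ↦ ?_
    simp only [Submodule.mem_comap, comp_apply, LieHom.coe_toLinearMap, LieHom.map_lie, hD _ _ _]
    exact add_mem (add_mem (lie_mem_left _ _ I _ _ (I.lie_mem (hI b)))
      (lie_mem_left _ _ I _ _ (lie_mem_left _ _ I _ _ (hI a))))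
      (lie_mem_left _ _ I _ _ (lie_mem_left _ _ I _ _ (hI a)))
  rintro _ ⟨x, rfl⟩
  obtain ⟨y, hy⟩ := LieDerivation.mem_ad_idealRange_iff.mp (hDI.ge (Submodule.mem_top (x := x)))
  exact ⟨y, hy⟩

/-- This is the triple-derivation identity for `a, b, x`, rewritten in terms of the defect. -/
theorem lieDerivDefect_lie_right (hf : f.IsLieTripleDerivation) (x a b : L) :
    f.lieDerivDefect x ⁅a, b⁆ = ⁅f.lieDerivDefect a b, x⁆ := by
  rw [lieDerivDefect, lieDerivDefect, ← lie_skew x, map_neg, hf a b x, ← lie_skew (f x),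
    ← lie_skew x (f ⁅a, b⁆), sub_lie, sub_lie]
  abel

theorem lie_lieDerivDefect_lie (hf : f.IsLieTripleDerivation) (p q y z : L) :
    ⁅f.lieDerivDefect p q, ⁅y, z⁆⁆ = ⁅⁅p, q⁆, f.lieDerivDefect y z⁆ := by
  have h := f.lieDerivDefect_swap ⁅p, q⁆ ⁅y, z⁆
  rw [hf.lieDerivDefect_lie_right, hf.lieDerivDefect_lie_right] at h
  rw [h, lie_skew]

/-- By `lieDerivDefect_cocycle` and `lie_lieDerivDefect_lie`, the bracket of the left-hand side
with `⁅a, b⁆` is the Jacobiator of `x, y, z` bracketed with the defect at `a, b`. -/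
theorem lie_lieDerivDefect_sub_add_eq_zero
    (hperf : ⁅(⊤ : LieIdeal R L), (⊤ : LieIdeal R L)⁆ = ⊤) (hZ : LieAlgebra.center R L = ⊥)
    (hf : f.IsLieTripleDerivation) (x y z : L) :
    ⁅f.lieDerivDefect x y, z⁆ - ⁅x, f.lieDerivDefect y z⁆ + ⁅y, f.lieDerivDefect x z⁆ = 0 := by
  refine LieAlgebra.eq_zero_of_lie_lie_eq_zero hperf hZ fun a b ↦ ?_
  rw [← lie_skew, neg_eq_zero, f.lieDerivDefect_cocycle, sub_lie, sub_lie,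
    hf.lie_lieDerivDefect_lie, hf.lie_lieDerivDefect_lie, hf.lie_lieDerivDefect_lie,
    ← sub_lie, ← sub_lie, lie_lie, sub_sub_cancel, sub_self, zero_lie]

theorem lieDerivDefect_eq_zero [Invertible (2 : R)]
    (hperf : ⁅(⊤ : LieIdeal R L), (⊤ : LieIdeal R L)⁆ = ⊤) (hZ : LieAlgebra.center R L = ⊥)
    (hf : f.IsLieTripleDerivation) (a b : L) : f.lieDerivDefect a b = 0 := by
  refine LieAlgebra.eq_zero_of_lie_lie_eq_zero hperf hZ fun x y ↦ ?_
  have h := hf.lie_lieDerivDefect_sub_add_eq_zero hperf hZ x y ⁅a, b⁆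
  rw [hf.lieDerivDefect_lie_right, hf.lieDerivDefect_lie_right, hf.lie_lieDerivDefect_lie] at h
  have h2 : (2 : R) • ⁅⁅x, y⁆, f.lieDerivDefect a b⁆ = 0 := by
    rw [two_smul, ← h, ← lie_skew (f.lieDerivDefect a b), ← lie_skew (f.lieDerivDefect a b),
      lie_neg, lie_neg]
    nth_rewrite 2 [lie_lie]
    abel
  exact (isUnit_of_invertible (2 : R)).smul_eq_zero.mp h2

def toLieDerivation [Invertible (2 : R)]
    (hperf : ⁅(⊤ : LieIdeal R L), (⊤ : LieIdeal R L)⁆ = ⊤) (hZ : LieAlgebra.center R L = ⊥)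
    (hf : f.IsLieTripleDerivation) : LieDerivation R L L where
  toLinearMap := f
  leibniz' a b := by
    have h := hf.lieDerivDefect_eq_zero hperf hZ a b
    rw [lieDerivDefect, sub_sub, sub_eq_zero] at h
    rw [h, ← lie_skew b, sub_neg_eq_add, add_comm]

end IsLieTripleDerivation

end LinearMap

/-- If `1/2 ∈ R` and `L` is perfect with trivial center, then every triple derivation `D` of
the derivation algebra `Der L` satisfies `D (ad x) = ad (d x)` for some derivation `d`. -/
theorem tripleDer_of_Der_ad (R L : Type*) [CommRing R] [LieRing L] [LieAlgebra R L]
    [Invertible (2 : R)]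
    (hperf : ⁅(⊤ : LieIdeal R L), (⊤ : LieIdeal R L)⁆ = ⊤)
    (hZ : LieAlgebra.center R L = ⊥)
    (D : LieDerivation R L L →ₗ[R] LieDerivation R L L)
    (hD : ∀ d₁ d₂ d₃ : LieDerivation R L L,
      D ⁅⁅d₁, d₂⁆, d₃⁆ = ⁅⁅D d₁, d₂⁆, d₃⁆ + ⁅⁅d₁, D d₂⁆, d₃⁆ + ⁅⁅d₁, d₂⁆, D d₃⁆) :
    ∃ d : LieDerivation R L L, ∀ x : L,
      D (LieDerivation.ad R L x) = LieDerivation.ad R L (d x) := by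
  have had := LieDerivation.injective_ad_of_center_eq_bot hZ
  obtain ⟨d, hd⟩ := LinearMap.exists_comp_eq_of_range_le had
    (LinearMap.IsLieTripleDerivation.range_comp_ad_le hperf hD)
  have hdD : d.IsLieTripleDerivation := .of_comp_eq had hD hd
  exact ⟨hdD.toLieDerivation hperf hZ, fun x ↦ (LinearMap.congr_fun hd x).symm⟩
end

section
/- Let R contain 1/2 and L be a perfect Lie algebra over R with trivial center. Then every triple derivation of Der(L) is an inner derivation of Der(L): TDer(Der(L)) = ad(Der(L)). -/
/-!
Since `L` is perfect, `L = [[L, L], L]`, and the triple derivation rule shows that `D` maps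
`ad L` into `ad L` (an ideal of `Der L`); as `Z(L) = 0` makes `ad` injective, `D` restricts to a
linear map `δ` of `L`, itself a triple derivation. Its Leibniz defect
`Φ(x, y) = δ[x, y] - [δx, y] - [x, δy]` satisfies `[Φ(x, y), z] = -Φ([x, y], z)`, from which
(using `Z(L) = 0` and Jacobi) `[Φ(x, y), [u, v]]` is both symmetric and antisymmetric under
`(x, y) ↔ (u, v)`. With `1/2 ∈ R` it vanishes, so `Φ` is central by perfectness, hence zero, and
`δ` is a derivation `d`. Finally `D - ad d` is a triple derivation of `Der L` killing `ad L`; for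
such a map `E`, `ad [(E e) x, y] = E [[e, ad x], ad y] = E (ad [e x, y]) = 0`, so `E = 0`.
-/

section

variable {R L : Type*} [CommRing R] [LieRing L] [LieAlgebra R L]

lemma LieAlgebra.submodule_eq_top_of_forall_lie_mem
    (hperf : ⁅(⊤ : LieIdeal R L), (⊤ : LieIdeal R L)⁆ = ⊤)
    {p : Submodule R L} (hp : ∀ x y : L, ⁅x, y⁆ ∈ p) : p = ⊤ := by
  rw [eq_top_iff, ← LieSubmodule.top_toSubmodule (R := R) (L := L), ← hperf,
    LieSubmodule.lieIdeal_oper_eq_linear_span', Submodule.span_le]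
  rintro _ ⟨x, -, y, -, rfl⟩
  exact hp x y

lemma LieAlgebra.submodule_eq_top_of_forall_lie_lie_mem
    (hperf : ⁅(⊤ : LieIdeal R L), (⊤ : LieIdeal R L)⁆ = ⊤)
    {p : Submodule R L} (hp : ∀ x y z : L, ⁅⁅x, y⁆, z⁆ ∈ p) : p = ⊤ := by
  refine LieAlgebra.submodule_eq_top_of_forall_lie_mem hperf fun x y => ?_
  have hx : p.comap (LieAlgebra.ad R L x) = ⊤ := by
    refine LieAlgebra.submodule_eq_top_of_forall_lie_mem hperf fun u v => ?_
    rw [Submodule.mem_comap, LieAlgebra.ad_apply, ← lie_skew]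
    exact neg_mem (hp u v x)
  exact hx.ge Submodule.mem_top

lemma LieAlgebra.eq_zero_of_forall_lie_eq_zero (hZ : LieAlgebra.center R L = ⊥) {a : L}
    (ha : ∀ z : L, ⁅a, z⁆ = 0) : a = 0 :=
  LieDerivation.injective_ad_of_center_eq_bot hZ (by ext z; simp [ha])

lemma LinearMap.exists_comp_eq_comp_of_injective {S M N : Type*} [Semiring S]
    [AddCommMonoid M] [Module S M] [AddCommMonoid N] [Module S N] {f : M →ₗ[S] N}
    (hf : Function.Injective f) {D : N →ₗ[S] N} (hD : ∀ x, D (f x) ∈ LinearMap.range f) :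
    ∃ δ : M →ₗ[S] M, ∀ x, D (f x) = f (δ x) := by
  let e := LinearEquiv.ofInjective f hf
  have hrange : ∀ n ∈ LinearMap.range f, D n ∈ LinearMap.range f := by
    rintro _ ⟨x, rfl⟩
    exact hD x
  refine ⟨e.symm.toLinearMap ∘ₗ D.restrict hrange ∘ₗ e.toLinearMap, fun x => ?_⟩
  simp [e]

def IsTripleDerivation {M : Type*} [LieRing M] [LieAlgebra R M] (D : M →ₗ[R] M) : Prop :=
  ∀ x y z : M, D ⁅⁅x, y⁆, z⁆ = ⁅⁅D x, y⁆, z⁆ + ⁅⁅x, D y⁆, z⁆ + ⁅⁅x, y⁆, D z⁆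

namespace IsTripleDerivation

variable {M : Type*} [LieRing M] [LieAlgebra R M]

lemma sub {D D' : M →ₗ[R] M} (hD : IsTripleDerivation D) (hD' : IsTripleDerivation D') :
    IsTripleDerivation (D - D') := by
  intro x y z
  simp only [LinearMap.sub_apply, hD x y z, hD' x y z, sub_lie, lie_sub]
  abel

lemma ad (d : M) : IsTripleDerivation (LieAlgebra.ad R M d) := by
  intro x y z
  simp only [LieAlgebra.ad_apply, leibniz_lie d ⁅x, y⁆ z, leibniz_lie d x y, add_lie]

lemma of_injective_lieHom {f : L →ₗ⁅R⁆ M} (hf : Function.Injective f) {D : M →ₗ[R] M}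
    (hD : IsTripleDerivation D) {δ : L →ₗ[R] L} (hfδ : ∀ x, D (f x) = f (δ x)) :
    IsTripleDerivation δ := by
  intro x y z
  apply hf
  simp only [LieHom.map_lie, map_add, ← hfδ]
  exact hD _ _ _

end IsTripleDerivation

def LinearMap.leibnizDefect (δ : L →ₗ[R] L) (x y : L) : L := δ ⁅x, y⁆ - ⁅δ x, y⁆ - ⁅x, δ y⁆

namespace LinearMap

variable (δ : L →ₗ[R] L)

lemma leibnizDefect_swap (x y : L) : δ.leibnizDefect x y = -δ.leibnizDefect y x := by
  simp only [leibnizDefect, ← lie_skew x y, map_neg, ← lie_skew (δ y) x, ← lie_skew y (δ x)]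
  abel

lemma leibnizDefect_sub_left (x x' y : L) :
    δ.leibnizDefect (x - x') y = δ.leibnizDefect x y - δ.leibnizDefect x' y := by
  simp only [leibnizDefect, sub_lie, map_sub]
  abel

end LinearMap

namespace IsTripleDerivation

variable {δ : L →ₗ[R] L}

lemma lie_leibnizDefect (hδ : IsTripleDerivation δ) (x y z : L) :
    ⁅δ.leibnizDefect x y, z⁆ = -δ.leibnizDefect ⁅x, y⁆ z := by
  simp only [LinearMap.leibnizDefect, sub_lie, hδ x y z]
  abel

lemma leibnizDefect_lie (hδ : IsTripleDerivation δ) (a x y : L) :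
    δ.leibnizDefect a ⁅x, y⁆ = ⁅δ.leibnizDefect x y, a⁆ := by
  rw [LinearMap.leibnizDefect_swap, hδ.lie_leibnizDefect]

lemma lie_lie_leibnizDefect (hδ : IsTripleDerivation δ) (a b c w : L) :
    ⁅⁅δ.leibnizDefect a b, c⁆, w⁆ = δ.leibnizDefect ⁅⁅a, b⁆, c⁆ w := by
  rw [hδ.lie_leibnizDefect, neg_lie, hδ.lie_leibnizDefect, neg_neg]

lemma lie_leibnizDefect_eq_sub (hδ : IsTripleDerivation δ) (hZ : LieAlgebra.center R L = ⊥)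
    (x y z : L) :
    ⁅δ.leibnizDefect x y, z⁆ = ⁅δ.leibnizDefect x z, y⁆ - ⁅δ.leibnizDefect y z, x⁆ := by
  rw [← sub_eq_zero]
  refine LieAlgebra.eq_zero_of_forall_lie_eq_zero hZ fun w => ?_
  have jacobi : ⁅⁅x, y⁆, z⁆ = ⁅⁅x, z⁆, y⁆ - ⁅⁅y, z⁆, x⁆ := by
    rw [lie_lie, ← lie_skew x ⁅y, z⁆, ← lie_skew y ⁅x, z⁆]
    abel
  rw [sub_lie, sub_lie, hδ.lie_lie_leibnizDefect, hδ.lie_lie_leibnizDefect,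
    hδ.lie_lie_leibnizDefect, jacobi, LinearMap.leibnizDefect_sub_left, sub_self]

lemma lie_leibnizDefect_lie_eq_zero [Invertible (2 : R)] (hδ : IsTripleDerivation δ)
    (hZ : LieAlgebra.center R L = ⊥) (x y u v : L) : ⁅δ.leibnizDefect x y, ⁅u, v⁆⁆ = 0 := by
  have hsymm : ⁅δ.leibnizDefect x y, ⁅u, v⁆⁆ = ⁅δ.leibnizDefect u v, ⁅x, y⁆⁆ := by
    rw [leibniz_lie, ← lie_skew u, hδ.lie_leibnizDefect_eq_sub hZ u v,
      ← hδ.leibnizDefect_lie u x y, ← hδ.leibnizDefect_lie v x y]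
    abel
  have hanti : ⁅δ.leibnizDefect x y, ⁅u, v⁆⁆ = -⁅δ.leibnizDefect u v, ⁅x, y⁆⁆ := by
    rw [hδ.lie_leibnizDefect, hδ.leibnizDefect_lie]
  refine (isUnit_of_invertible (2 : R)).smul_eq_zero.1 ?_
  rw [two_smul]
  nth_rw 2 [hanti]
  rw [hsymm, add_neg_cancel]

lemma leibnizDefect_eq_zero [Invertible (2 : R)] (hδ : IsTripleDerivation δ)
    (hperf : ⁅(⊤ : LieIdeal R L), (⊤ : LieIdeal R L)⁆ = ⊤) (hZ : LieAlgebra.center R L = ⊥)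
    (x y : L) : δ.leibnizDefect x y = 0 := by
  refine LieAlgebra.eq_zero_of_forall_lie_eq_zero hZ fun z => ?_
  have hker : LinearMap.ker (LieAlgebra.ad R L (δ.leibnizDefect x y)) = ⊤ :=
    LieAlgebra.submodule_eq_top_of_forall_lie_mem hperf (hδ.lie_leibnizDefect_lie_eq_zero hZ x y)
  simpa using LinearMap.mem_ker.1 (hker.ge (Submodule.mem_top (x := z)))

def toLieDerivation [Invertible (2 : R)] (hδ : IsTripleDerivation δ)
    (hperf : ⁅(⊤ : LieIdeal R L), (⊤ : LieIdeal R L)⁆ = ⊤) (hZ : LieAlgebra.center R L = ⊥) :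
    LieDerivation R L L where
  toLinearMap := δ
  leibniz' x y := by
    have h := hδ.leibnizDefect_eq_zero hperf hZ x y
    rw [LinearMap.leibnizDefect, sub_sub, sub_eq_zero] at h
    rw [h, ← lie_skew y]
    abel

lemma map_ad_mem_range {D : LieDerivation R L L →ₗ[R] LieDerivation R L L}
    (hD : IsTripleDerivation D) (hperf : ⁅(⊤ : LieIdeal R L), (⊤ : LieIdeal R L)⁆ = ⊤) (x : L) :
    D (LieDerivation.ad R L x) ∈ LinearMap.range (LieDerivation.ad R L : L →ₗ[R] _) := by
  suffices h : (LinearMap.range (LieDerivation.ad R L : L →ₗ[R] _)).comap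
      (D ∘ₗ (LieDerivation.ad R L : L →ₗ[R] _)) = ⊤ from h.ge Submodule.mem_top
  refine LieAlgebra.submodule_eq_top_of_forall_lie_lie_mem hperf fun u v w => ?_
  let I := (LieDerivation.ad R L).idealRange
  have hI (z : L) : LieDerivation.ad R L z ∈ I := LieHom.mem_idealRange _ z
  have hmem : D (LieDerivation.ad R L ⁅⁅u, v⁆, w⁆) ∈ I := by
    rw [LieHom.map_lie, LieHom.map_lie, hD]
    exact add_mem (add_mem (I.lie_mem (hI w)) (I.lie_mem (hI w)))
      (lie_mem_left R _ I _ _ (I.lie_mem (hI v)))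
  obtain ⟨y, hy⟩ := LieDerivation.mem_ad_idealRange_iff.1 hmem
  exact ⟨y, hy⟩

lemma eq_zero_of_map_ad_eq_zero {D : LieDerivation R L L →ₗ[R] LieDerivation R L L}
    (hD : IsTripleDerivation D) (hZ : LieAlgebra.center R L = ⊥)
    (h : ∀ x, D (LieDerivation.ad R L x) = 0) : D = 0 := by
  ext e x
  refine LieAlgebra.eq_zero_of_forall_lie_eq_zero hZ fun y =>
    LieDerivation.injective_ad_of_center_eq_bot hZ ?_
  calc LieDerivation.ad R L ⁅D e x, y⁆
      = (⁅⁅D e, LieDerivation.ad R L x⁆, LieDerivation.ad R L y⁆ : LieDerivation R L L) := by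
        rw [LieDerivation.lie_der_ad_eq_ad_der (D e) x, LieHom.map_lie]
    _ = D (LieDerivation.ad R L ⁅e x, y⁆) := by
        rw [LieHom.map_lie, ← LieDerivation.lie_der_ad_eq_ad_der, hD, h, h]
        simp only [lie_zero, zero_lie, add_zero]
    _ = LieDerivation.ad R L 0 := by rw [h, map_zero]

end IsTripleDerivation

end

/-- If `1/2 ∈ R` and `L` is perfect with trivial center, then every triple derivation of the
derivation algebra `Der L` is an inner derivation: `TDer (Der L) = ad (Der L)`. -/
theorem tripleDer_of_Der_is_inner (R L : Type*) [CommRing R] [LieRing L] [LieAlgebra R L]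
    [Invertible (2 : R)]
    (hperf : ⁅(⊤ : LieIdeal R L), (⊤ : LieIdeal R L)⁆ = ⊤)
    (hZ : LieAlgebra.center R L = ⊥)
    (D : LieDerivation R L L →ₗ[R] LieDerivation R L L)
    (hD : ∀ d₁ d₂ d₃ : LieDerivation R L L,
      D ⁅⁅d₁, d₂⁆, d₃⁆ = ⁅⁅D d₁, d₂⁆, d₃⁆ + ⁅⁅d₁, D d₂⁆, d₃⁆ + ⁅⁅d₁, d₂⁆, D d₃⁆) :
    ∃ d : LieDerivation R L L, ∀ e : LieDerivation R L L, D e = ⁅d, e⁆ := by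
  have had := LieDerivation.injective_ad_of_center_eq_bot hZ
  have hD : IsTripleDerivation D := hD
  obtain ⟨δ, hδ⟩ := LinearMap.exists_comp_eq_comp_of_injective had (hD.map_ad_mem_range hperf)
  simp only [LieHom.coe_toLinearMap] at hδ
  let d := (hD.of_injective_lieHom had hδ).toLieDerivation hperf hZ
  refine ⟨d, fun e => ?_⟩
  have hDd : D - LieAlgebra.ad R _ d = 0 :=
    (hD.sub (IsTripleDerivation.ad d)).eq_zero_of_map_ad_eq_zero hZ fun x => by
      show D _ - ⁅d, _⁆ = 0
      rw [hδ, LieDerivation.lie_der_ad_eq_ad_der]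
      exact sub_self _
  simpa [sub_eq_zero] using LinearMap.congr_fun hDd e
end

section
/- Over a field of characteristic 2, the identity map of any non-abelian Lie algebra L is a triple derivation of L but not a derivation. -/
def IsDer (R : Type*) {L : Type*} [CommRing R] [LieRing L] [LieAlgebra R L]
    (D : L →ₗ[R] L) : Prop :=
  ∀ x y : L, D ⁅x, y⁆ = ⁅D x, y⁆ + ⁅x, D y⁆

/-! For `D = id` the derivation rule reads `⁅x, y⁆ = 2 ⁅x, y⁆`, which forces every bracket to
vanish, while the triple derivation rule reads `⁅⁅x, y⁆, z⁆ = 3 ⁅⁅x, y⁆, z⁆`, which holds as soon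
as `2 = 0`. -/

section

variable (R L : Type*) [CommRing R] [LieRing L] [LieAlgebra R L]

theorem isDer_id_iff_isLieAbelian :
    IsDer R (LinearMap.id : L →ₗ[R] L) ↔ IsLieAbelian L := by
  refine ⟨fun h => ⟨fun x y => ?_⟩, fun h x y => ?_⟩
  · simpa using h x y
  · simp [trivial_lie_zero]

theorem add_self_eq_zero_of_charP_two [CharP R 2] (v : L) : v + v = 0 := by
  rw [← two_smul R v, CharTwo.two_eq_zero, zero_smul]

theorem isTripleDer_id_of_charP_two [CharP R 2] :
    IsTripleDer R (LinearMap.id : L →ₗ[R] L) := by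
  intro x y z
  simp only [LinearMap.id_coe, id_eq, add_self_eq_zero_of_charP_two R, zero_add]

end

/-- Over a field of characteristic 2, the identity map of a non-abelian Lie algebra is a
triple derivation but not a derivation. -/
theorem id_tripleDer_not_der_char_two (F L : Type*) [Field F] [CharP F 2]
    [LieRing L] [LieAlgebra F L]
    (hnonab : ∃ x y : L, ⁅x, y⁆ ≠ 0) :
    IsTripleDer F (LinearMap.id : L →ₗ[F] L) ∧ ¬ IsDer F (LinearMap.id : L →ₗ[F] L) := by
  obtain ⟨x, y, hxy⟩ := hnonab
  refine ⟨isTripleDer_id_of_charP_two F L, fun hder => hxy ?_⟩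
  exact ((isDer_id_iff_isLieAbelian F L).mp hder).trivial x y
end

section
/- Let f : L → L' be a triple homomorphism with L perfect and the enveloping Lie subalgebra M of f(L) centerless. Then there is a well-defined R-linear map δ_f : L → L' such that for every x ∈ L written as x = Σᵢ [x_{i1}, x_{i2}], one has δ_f(x) = Σᵢ [f(x_{i1}), f(x_{i2})]; i.e., the value is independent of the chosen expression of x. -/
/-!
Write `μ : L ⊗ L → L` for the bracket of `L` and `β : L ⊗ L → L'` for `x ⊗ y ↦ ⁅f x, f y⁆`.
Since `L` is perfect, `μ` is onto, so `δ_f` exists as soon as `ker μ ≤ ker β`. The triple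
identity gives `⁅f z, β t⁆ = f ⁅z, μ t⁆`, so for `t ∈ ker μ` the element `β t ∈ M` commutes with
the generators `f z` of `M`, hence lies in the centre of `M`, which is zero.
-/

open TensorProduct

theorem LinearMap.exists_comp_eq_of_surjective_of_ker_le {R M N P : Type*} [CommRing R]
    [AddCommGroup M] [Module R M] [AddCommGroup N] [Module R N] [AddCommGroup P] [Module R P]
    {m : M →ₗ[R] N} {g : M →ₗ[R] P} (hm : Function.Surjective m) (h : ker m ≤ ker g) :
    ∃ δ : N →ₗ[R] P, δ ∘ₗ m = g := by
  refine ⟨(ker m).liftQ g h ∘ₗ (m.quotKerEquivOfSurjective hm).symm.toLinearMap, ?_⟩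
  ext x
  have hx : (m.quotKerEquivOfSurjective hm).symm (m x) = Submodule.Quotient.mk x :=
    (LinearEquiv.symm_apply_eq _).mpr rfl
  simp [hx]

theorem LieModule.toModuleHom_surjective {R L M : Type*} [CommRing R] [LieRing L]
    [LieAlgebra R L] [AddCommGroup M] [Module R M] [LieRingModule L M] [LieModule R L M]
    (h : ⁅(⊤ : LieIdeal R L), (⊤ : LieSubmodule R L M)⁆ = ⊤) :
    Function.Surjective (toModuleHom R L M) := by
  intro x
  have hx : x ∈ ⁅(⊤ : LieIdeal R L), (⊤ : LieSubmodule R L M)⁆ := by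
    rw [h]
    exact LieSubmodule.mem_top x
  rw [LieSubmodule.lieIdeal_oper_eq_tensor_map_range] at hx
  obtain ⟨t, rfl⟩ := hx
  exact ⟨_, rfl⟩

theorem LieSubalgebra.mem_center_lieSpan {R L : Type*} [CommRing R] [LieRing L]
    [LieAlgebra R L] {s : Set L} {y : L} (hy : y ∈ lieSpan R L s) (h : ∀ x ∈ s, ⁅x, y⁆ = 0) :
    (⟨y, hy⟩ : lieSpan R L s) ∈ LieAlgebra.center R (lieSpan R L s) := by
  rw [LieModule.mem_maxTrivSubmodule]
  rintro ⟨x, hx⟩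
  ext
  change ⁅x, y⁆ = 0
  induction hx using lieSpan_induction with
  | mem x hx => exact h x hx
  | zero => exact zero_lie y
  | add _ _ _ _ ha hb => rw [add_lie, ha, hb, add_zero]
  | smul c _ _ ha => rw [smul_lie, ha, smul_zero]
  | lie _ _ _ _ ha hb => rw [lie_lie, ha, hb, lie_zero, lie_zero, sub_zero]

section TripleHom

variable {R L L' : Type*} [CommRing R] [LieRing L] [LieAlgebra R L] [LieRing L']
  [LieAlgebra R L']

def bracketMap (f : L →ₗ[R] L') : L ⊗[R] L →ₗ[R] L' :=
  (LieModule.toModuleHom R L' L' : L' ⊗[R] L' →ₗ[R] L') ∘ₗ TensorProduct.map f f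

@[simp]
theorem bracketMap_tmul (f : L →ₗ[R] L') (x y : L) : bracketMap f (x ⊗ₜ y) = ⁅f x, f y⁆ := by
  simp [bracketMap]

theorem bracketMap_mem_lieSpan (f : L →ₗ[R] L') (t : L ⊗[R] L) :
    bracketMap f t ∈ LieSubalgebra.lieSpan R L' (Set.range f) := by
  induction t using TensorProduct.induction_on with
  | zero => simp
  | tmul x y =>
    rw [bracketMap_tmul]
    exact LieSubalgebra.lie_mem _ (LieSubalgebra.subset_lieSpan ⟨x, rfl⟩)
      (LieSubalgebra.subset_lieSpan ⟨y, rfl⟩)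
  | add t₁ t₂ h₁ h₂ => simpa only [map_add] using add_mem h₁ h₂

variable {f : L →ₗ[R] L'} (hf : ∀ x y z : L, f ⁅x, ⁅y, z⁆⁆ = ⁅f x, ⁅f y, f z⁆⁆)
include hf

theorem lie_bracketMap (z : L) (t : L ⊗[R] L) :
    ⁅f z, bracketMap f t⁆ = f ⁅z, LieModule.toModuleHom R L L t⁆ := by
  induction t using TensorProduct.induction_on with
  | zero => simp
  | tmul x y => simp [hf]
  | add t₁ t₂ h₁ h₂ => simp only [map_add, lie_add, h₁, h₂]

theorem ker_toModuleHom_le_ker_bracketMap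
    (hZ : LieAlgebra.center R (LieSubalgebra.lieSpan R L' (Set.range f)) = ⊥) :
    LinearMap.ker (LieModule.toModuleHom R L L : L ⊗[R] L →ₗ[R] L) ≤
      LinearMap.ker (bracketMap f) := by
  intro t ht
  rw [LinearMap.mem_ker, LieModuleHom.coe_toLinearMap] at ht
  rw [LinearMap.mem_ker]
  have hcentral := LieSubalgebra.mem_center_lieSpan (bracketMap_mem_lieSpan f t) <| by
    rintro _ ⟨z, rfl⟩
    rw [lie_bracketMap hf, ht, lie_zero, map_zero]
  rw [hZ, LieSubmodule.mem_bot] at hcentral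
  exact congrArg Subtype.val hcentral

end TripleHom

/-- For a triple homomorphism `f` of a perfect Lie algebra `L` whose enveloping algebra `M`
is centerless, there is a well-defined linear map `δ_f` with
`δ_f (∑ ⁅aᵢ, bᵢ⁆) = ∑ ⁅f aᵢ, f bᵢ⁆`. -/
theorem exists_deltaF (R L L' : Type*) [CommRing R]
    [LieRing L] [LieAlgebra R L] [LieRing L'] [LieAlgebra R L']
    (f : L →ₗ[R] L')
    (hf : ∀ x y z : L, f ⁅x, ⁅y, z⁆⁆ = ⁅f x, ⁅f y, f z⁆⁆)
    (hperf : ⁅(⊤ : LieIdeal R L), (⊤ : LieIdeal R L)⁆ = ⊤)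
    (hZ : LieAlgebra.center R ↥(LieSubalgebra.lieSpan R L' (Set.range f)) = ⊥) :
    ∃ δ : L →ₗ[R] L', ∀ (x : L) (n : ℕ) (a b : Fin n → L),
      x = ∑ i, ⁅a i, b i⁆ → δ x = ∑ i, ⁅f (a i), f (b i)⁆ := by
  obtain ⟨δ, hδ⟩ := LinearMap.exists_comp_eq_of_surjective_of_ker_le
    (LieModule.toModuleHom_surjective hperf) (ker_toModuleHom_le_ker_bracketMap hf hZ)
  refine ⟨δ, fun x n a b hx => ?_⟩
  have := LinearMap.congr_fun hδ (∑ i, a i ⊗ₜ b i)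
  simpa [hx] using this
end

section
/- Let f : L → L' be a triple homomorphism with L perfect and the enveloping Lie algebra M of f(L) centerless, and let δ_f be the induced map with δ_f([x,y]) = [f x, f y]. Then f(ad x (z)) = [δ_f(x), f(z)] for all x, z ∈ L, i.e., f ∘ ad x = ad_{δ_f(x)} ∘ f. -/
/-!
If `x = ⁅a, b⁆`, the triple-homomorphism identity gives
`f ⁅⁅a, b⁆, z⁆ = ⁅⁅f a, f b⁆, f z⁆ = ⁅δ ⁅a, b⁆, f z⁆`. Both sides of the claim are linear in `x`,
and since `L` is perfect the brackets span `L`, so the identity holds for every `x`.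
-/

namespace LieAlgebra

variable {R L : Type*} [CommRing R] [LieRing L] [LieAlgebra R L]

theorem span_range_lie_eq_top_of_perfect
    (hperf : ⁅(⊤ : LieIdeal R L), (⊤ : LieIdeal R L)⁆ = ⊤) :
    Submodule.span R (Set.range fun p : L × L => (⁅p.1, p.2⁆ : L)) = ⊤ := by
  rw [eq_top_iff, ← LieSubmodule.top_toSubmodule (R := R) (L := L), ← hperf,
    LieSubmodule.lieIdeal_oper_eq_linear_span]
  refine Submodule.span_mono ?_
  rintro - ⟨⟨a, -⟩, ⟨b, -⟩, rfl⟩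
  exact ⟨(a, b), rfl⟩

theorem linearMap_ext_of_perfect_s14 {N : Type*} [AddCommGroup N] [Module R N]
    (hperf : ⁅(⊤ : LieIdeal R L), (⊤ : LieIdeal R L)⁆ = ⊤) {g h : L →ₗ[R] N}
    (hgh : ∀ a b : L, g ⁅a, b⁆ = h ⁅a, b⁆) : g = h :=
  LinearMap.ext_on_range (span_range_lie_eq_top_of_perfect hperf) fun p => hgh p.1 p.2

end LieAlgebra

theorem f_ad_eq_ad_deltaF_general (R L L' : Type*) [CommRing R]
    [LieRing L] [LieAlgebra R L] [LieRing L'] [LieAlgebra R L']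
    (f : L →ₗ[R] L')
    (hf : ∀ x y z : L, f ⁅x, ⁅y, z⁆⁆ = ⁅f x, ⁅f y, f z⁆⁆)
    (hperf : ⁅(⊤ : LieIdeal R L), (⊤ : LieIdeal R L)⁆ = ⊤)
    (δ : L →ₗ[R] L') (hδ : ∀ x y : L, δ ⁅x, y⁆ = ⁅f x, f y⁆) :
    ∀ x z : L, f ⁅x, z⁆ = ⁅δ x, f z⁆ := by
  intro x z
  have hlin : f ∘ₗ (LieModule.toEnd R L L : L →ₗ[R] Module.End R L).flip z =
      ((LieModule.toEnd R L' L' : L' →ₗ[R] Module.End R L').flip (f z)) ∘ₗ δ := by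
    refine LieAlgebra.linearMap_ext_of_perfect_s14 hperf fun a b => ?_
    change f ⁅⁅a, b⁆, z⁆ = ⁅δ ⁅a, b⁆, f z⁆
    rw [← lie_skew, map_neg, hf, hδ, ← lie_skew, neg_neg]
  exact LinearMap.congr_fun hlin x

/-- For a triple homomorphism `f` of a perfect Lie algebra with centerless enveloping
algebra, `f ∘ ad x = ad (δ_f x) ∘ f`. -/
theorem f_ad_eq_ad_deltaF (R L L' : Type*) [CommRing R]
    [LieRing L] [LieAlgebra R L] [LieRing L'] [LieAlgebra R L']
    (f : L →ₗ[R] L')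
    (hf : ∀ x y z : L, f ⁅x, ⁅y, z⁆⁆ = ⁅f x, ⁅f y, f z⁆⁆)
    (hperf : ⁅(⊤ : LieIdeal R L), (⊤ : LieIdeal R L)⁆ = ⊤)
    (hZ : LieAlgebra.center R ↥(LieSubalgebra.lieSpan R L' (Set.range f)) = ⊥)
    (δ : L →ₗ[R] L') (hδ : ∀ x y : L, δ ⁅x, y⁆ = ⁅f x, f y⁆) :
    ∀ x z : L, f ⁅x, z⁆ = ⁅δ x, f z⁆ :=
  f_ad_eq_ad_deltaF_general R L L' f hf hperf δ hδ
end

section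
/- Let f : L → L' be a triple homomorphism with L perfect and the enveloping Lie algebra M of f(L) centerless. Then the induced map δ_f (determined by δ_f([x,y]) = [f x, f y]) is a Lie algebra homomorphism: δ_f([x,y]) = [δ_f(x), δ_f(y)] for all x, y ∈ L. -/
/-!
Perfectness means `L` is spanned by brackets, so linear maps out of `L` are determined by their
values on brackets. On a bracket `⁅u, v⁆` the triple-homomorphism identity reads
`⁅f z, δ ⁅u, v⁆⁆ = f ⁅z, ⁅u, v⁆⁆`, hence `ad (δ x)` restricts to `f ∘ ad x` on `f(L)`.
Expanding `δ ⁅x, ⁅u, v⁆⁆` by the Jacobi identity and applying this twice gives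
`⁅δ x, ⁅f u, f v⁆⁆ = ⁅δ x, δ ⁅u, v⁆⁆`.
-/

open LieAlgebra

section Perfect

variable {R L : Type*} [CommRing R] [LieRing L] [LieAlgebra R L]

theorem LieAlgebra.span_range_lie_eq_top_of_perfect_s15
    (hperf : ⁅(⊤ : LieIdeal R L), (⊤ : LieIdeal R L)⁆ = ⊤) :
    Submodule.span R (Set.range fun p : L × L => ⁅p.1, p.2⁆) = ⊤ := by
  rw [← LieSubmodule.top_toSubmodule (R := R) (L := L), ← hperf,
    LieSubmodule.lieIdeal_oper_eq_linear_span']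
  congr
  ext m
  simp

theorem LinearMap.ext_of_perfect {M : Type*} [AddCommGroup M] [Module R M]
    (hperf : ⁅(⊤ : LieIdeal R L), (⊤ : LieIdeal R L)⁆ = ⊤) {g₁ g₂ : L →ₗ[R] M}
    (h : ∀ u v : L, g₁ ⁅u, v⁆ = g₂ ⁅u, v⁆) : g₁ = g₂ :=
  LinearMap.ext_on_range (span_range_lie_eq_top_of_perfect_s15 hperf) fun p => h p.1 p.2

end Perfect

section TripleHom

variable {R L L' : Type*} [CommRing R] [LieRing L] [LieAlgebra R L] [LieRing L']
  [LieAlgebra R L'] {f δ : L →ₗ[R] L'}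

theorem lie_deltaF_map_eq_map_lie (hperf : ⁅(⊤ : LieIdeal R L), (⊤ : LieIdeal R L)⁆ = ⊤)
    (hf : ∀ x y z : L, f ⁅x, ⁅y, z⁆⁆ = ⁅f x, ⁅f y, f z⁆⁆)
    (hδ : ∀ x y : L, δ ⁅x, y⁆ = ⁅f x, f y⁆) (x z : L) :
    ⁅δ x, f z⁆ = f ⁅x, z⁆ := by
  have hcomm : ad R L' (f z) ∘ₗ δ = f ∘ₗ ad R L z :=
    LinearMap.ext_of_perfect hperf fun u v => by simp [hδ, hf]
  rw [← lie_skew, ← ad_apply (R := R), ← LinearMap.comp_apply, hcomm, LinearMap.comp_apply,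
    ad_apply, ← map_neg, lie_skew]

end TripleHom

theorem deltaF_isHom_general (R L L' : Type*) [CommRing R]
    [LieRing L] [LieAlgebra R L] [LieRing L'] [LieAlgebra R L']
    (f : L →ₗ[R] L')
    (hf : ∀ x y z : L, f ⁅x, ⁅y, z⁆⁆ = ⁅f x, ⁅f y, f z⁆⁆)
    (hperf : ⁅(⊤ : LieIdeal R L), (⊤ : LieIdeal R L)⁆ = ⊤)
    (δ : L →ₗ[R] L') (hδ : ∀ x y : L, δ ⁅x, y⁆ = ⁅f x, f y⁆) :
    ∀ x y : L, δ ⁅x, y⁆ = ⁅δ x, δ y⁆ := by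
  intro x
  have key := lie_deltaF_map_eq_map_lie hperf hf hδ x
  suffices δ ∘ₗ ad R L x = ad R L' (δ x) ∘ₗ δ from fun y => LinearMap.congr_fun this y
  refine LinearMap.ext_of_perfect hperf fun u v => ?_
  calc δ ⁅x, ⁅u, v⁆⁆ = δ (⁅⁅x, u⁆, v⁆ + ⁅u, ⁅x, v⁆⁆) := by rw [leibniz_lie]
    _ = ⁅⁅δ x, f u⁆, f v⁆ + ⁅f u, ⁅δ x, f v⁆⁆ := by rw [map_add, hδ, hδ, key, key]
    _ = ⁅δ x, δ ⁅u, v⁆⁆ := by rw [← leibniz_lie, hδ]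

/-- For a triple homomorphism `f` of a perfect Lie algebra with centerless enveloping
algebra, the induced map `δ_f` is a Lie algebra homomorphism. -/
theorem deltaF_isHom (R L L' : Type*) [CommRing R]
    [LieRing L] [LieAlgebra R L] [LieRing L'] [LieAlgebra R L']
    (f : L →ₗ[R] L')
    (hf : ∀ x y z : L, f ⁅x, ⁅y, z⁆⁆ = ⁅f x, ⁅f y, f z⁆⁆)
    (hperf : ⁅(⊤ : LieIdeal R L), (⊤ : LieIdeal R L)⁆ = ⊤)
    (hZ : LieAlgebra.center R ↥(LieSubalgebra.lieSpan R L' (Set.range f)) = ⊥)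
    (δ : L →ₗ[R] L') (hδ : ∀ x y : L, δ ⁅x, y⁆ = ⁅f x, f y⁆) :
    ∀ x y : L, δ ⁅x, y⁆ = ⁅δ x, δ y⁆ :=
  deltaF_isHom_general R L L' f hf hperf δ hδ
end

section
/- Let f : L → L' be a triple homomorphism with L perfect and the enveloping Lie algebra M of f(L) centerless, and δ_f the induced homomorphism. Then the images M⁺ = Im(f + δ_f) and M⁻ = Im(f − δ_f) generate ideals of M that commute: [f(x)+δ_f(x), f(y)−δ_f(y)] = 0 for all x, y ∈ L. -/
/-!
Perfectness of `L` lets one test linear identities on brackets only. On a bracket `⁅a, b⁆` the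
triple-homomorphism law gives `f ⁅x, w⁆ = ⁅f x, δ w⁆`, hence `⁅δ a, f b⁆ = f ⁅a, b⁆`, and applying
this twice through the Jacobi identity shows that `⁅δ x, δ y⁆` and `⁅f x, f y⁆` act in the same way
on `f(L)`. Their difference therefore centralizes the Lie algebra `M` generated by `f(L)`, so it
vanishes as `M` is centerless. Expanding `⁅f x + δ x, f y - δ y⁆`, the cross terms cancel and what
remains is exactly that difference.
-/

open LieSubalgebra

section Perfect

variable {R L N : Type*} [CommRing R] [LieRing L] [LieAlgebra R L] [AddCommGroup N] [Module R N]

theorem Submodule.eq_top_of_lie_mem_of_perfect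
    (hperf : ⁅(⊤ : LieIdeal R L), (⊤ : LieIdeal R L)⁆ = ⊤)
    (p : Submodule R L) (hp : ∀ a b : L, ⁅a, b⁆ ∈ p) : p = ⊤ := by
  rw [eq_top_iff, ← LieSubmodule.top_toSubmodule (R := R) (L := L) (M := L), ← hperf,
    LieSubmodule.lieIdeal_oper_eq_linear_span', Submodule.span_le]
  rintro _ ⟨a, -, b, -, rfl⟩
  exact hp a b

theorem LinearMap.ext_of_perfect_s16 (hperf : ⁅(⊤ : LieIdeal R L), (⊤ : LieIdeal R L)⁆ = ⊤)
    {g h : L →ₗ[R] N} (hgh : ∀ a b : L, g ⁅a, b⁆ = h ⁅a, b⁆) : g = h :=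
  LinearMap.eqLocus_eq_top.mp (Submodule.eq_top_of_lie_mem_of_perfect hperf _ hgh)

theorem LinearMap.range_le_of_perfect (hperf : ⁅(⊤ : LieIdeal R L), (⊤ : LieIdeal R L)⁆ = ⊤)
    {g : L →ₗ[R] N} {P : Submodule R N} (hg : ∀ a b : L, g ⁅a, b⁆ ∈ P) : LinearMap.range g ≤ P :=
  LinearMap.range_le_iff_comap.mpr (Submodule.eq_top_of_lie_mem_of_perfect hperf _ hg)

end Perfect

theorem LieSubalgebra.eq_zero_of_forall_lie_eq_zero_of_center_lieSpan_eq_bot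
    {R L : Type*} [CommRing R] [LieRing L] [LieAlgebra R L] {s : Set L}
    (hZ : LieAlgebra.center R (lieSpan R L s) = ⊥) {c : L} (hc : c ∈ lieSpan R L s)
    (hcs : ∀ z ∈ s, ⁅c, z⁆ = 0) : c = 0 := by
  have hcM : ∀ m ∈ lieSpan R L s, ⁅m, c⁆ = 0 := by
    intro m hm
    induction hm using lieSpan_induction with
    | mem z hz => rw [← lie_skew, hcs z hz, neg_zero]
    | zero => exact zero_lie c
    | add _ _ _ _ hu hv => rw [add_lie, hu, hv, add_zero]
    | smul t _ _ hu => rw [smul_lie, hu, smul_zero]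
    | lie u v _ _ hu hv => rw [lie_lie, hu, hv, lie_zero, lie_zero, sub_zero]
  have hcZ : (⟨c, hc⟩ : lieSpan R L s) ∈ LieAlgebra.center R (lieSpan R L s) := by
    rw [LieModule.mem_maxTrivSubmodule]
    exact fun m => Subtype.ext (hcM m m.2)
  rw [hZ, LieSubmodule.mem_bot] at hcZ
  exact congrArg Subtype.val hcZ

section TripleHom

variable {R L L' : Type*} [CommRing R] [LieRing L] [LieAlgebra R L] [LieRing L'] [LieAlgebra R L']
  {f δ : L →ₗ[R] L'}

theorem map_lie_eq_lie_map_delta (hf : ∀ x y z : L, f ⁅x, ⁅y, z⁆⁆ = ⁅f x, ⁅f y, f z⁆⁆)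
    (hperf : ⁅(⊤ : LieIdeal R L), (⊤ : LieIdeal R L)⁆ = ⊤) (hδ : ∀ x y : L, δ ⁅x, y⁆ = ⁅f x, f y⁆)
    (x w : L) : f ⁅x, w⁆ = ⁅f x, δ w⁆ := by
  have hext : f ∘ₗ LieModule.toEnd R L L x = LieModule.toEnd R L' L' (f x) ∘ₗ δ :=
    LinearMap.ext_of_perfect_s16 hperf fun a b => by
      simp only [LinearMap.comp_apply, LieModule.toEnd_apply_apply, hf, hδ]
  exact LinearMap.congr_fun hext w

theorem lie_delta_map_eq_map_lie (hf : ∀ x y z : L, f ⁅x, ⁅y, z⁆⁆ = ⁅f x, ⁅f y, f z⁆⁆)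
    (hperf : ⁅(⊤ : LieIdeal R L), (⊤ : LieIdeal R L)⁆ = ⊤) (hδ : ∀ x y : L, δ ⁅x, y⁆ = ⁅f x, f y⁆)
    (a b : L) : ⁅δ a, f b⁆ = f ⁅a, b⁆ := by
  rw [← lie_skew, ← map_lie_eq_lie_map_delta hf hperf hδ b a, ← map_neg, lie_skew]

theorem lie_lie_delta_map_eq (hf : ∀ x y z : L, f ⁅x, ⁅y, z⁆⁆ = ⁅f x, ⁅f y, f z⁆⁆)
    (hperf : ⁅(⊤ : LieIdeal R L), (⊤ : LieIdeal R L)⁆ = ⊤) (hδ : ∀ x y : L, δ ⁅x, y⁆ = ⁅f x, f y⁆)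
    (x y z : L) : ⁅⁅δ x, δ y⁆, f z⁆ = ⁅⁅f x, f y⁆, f z⁆ := by
  have hdf := lie_delta_map_eq_map_lie hf hperf hδ
  rw [lie_lie, hdf, hdf, hdf, hdf, ← map_sub, ← lie_lie, ← lie_skew ⁅x, y⁆ z,
    ← lie_skew ⁅f x, f y⁆ (f z), map_neg, hf]

theorem delta_mem_lieSpan_range
    (hperf : ⁅(⊤ : LieIdeal R L), (⊤ : LieIdeal R L)⁆ = ⊤) (hδ : ∀ x y : L, δ ⁅x, y⁆ = ⁅f x, f y⁆)
    (x : L) : δ x ∈ lieSpan R L' (Set.range f) := by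
  refine LinearMap.range_le_of_perfect (P := (lieSpan R L' (Set.range f)).toSubmodule) hperf
    (fun a b => ?_) (LinearMap.mem_range_self δ x)
  rw [hδ]
  exact lie_mem _ (subset_lieSpan ⟨a, rfl⟩) (subset_lieSpan ⟨b, rfl⟩)

end TripleHom

/-- For a triple homomorphism `f` of a perfect Lie algebra with centerless enveloping
algebra, the ideals generated by `Im (f + δ_f)` and `Im (f - δ_f)` commute. -/
theorem images_commute (R L L' : Type*) [CommRing R]
    [LieRing L] [LieAlgebra R L] [LieRing L'] [LieAlgebra R L']
    (f : L →ₗ[R] L')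
    (hf : ∀ x y z : L, f ⁅x, ⁅y, z⁆⁆ = ⁅f x, ⁅f y, f z⁆⁆)
    (hperf : ⁅(⊤ : LieIdeal R L), (⊤ : LieIdeal R L)⁆ = ⊤)
    (hZ : LieAlgebra.center R ↥(LieSubalgebra.lieSpan R L' (Set.range f)) = ⊥)
    (δ : L →ₗ[R] L') (hδ : ∀ x y : L, δ ⁅x, y⁆ = ⁅f x, f y⁆) :
    ∀ x y : L, ⁅f x + δ x, f y - δ y⁆ = 0 := by
  intro x y
  have hfM : ∀ z, f z ∈ lieSpan R L' (Set.range f) := fun z => subset_lieSpan ⟨z, rfl⟩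
  have hδM := delta_mem_lieSpan_range hperf hδ
  have hcross : ⁅δ x, f y⁆ = ⁅f x, δ y⁆ := by
    rw [lie_delta_map_eq_map_lie hf hperf hδ, map_lie_eq_lie_map_delta hf hperf hδ]
  have hdiff : ⁅f x, f y⁆ - ⁅δ x, δ y⁆ = 0 := by
    refine eq_zero_of_forall_lie_eq_zero_of_center_lieSpan_eq_bot hZ
      (sub_mem (lie_mem _ (hfM x) (hfM y)) (lie_mem _ (hδM x) (hδM y))) ?_
    rintro _ ⟨z, rfl⟩
    rw [sub_lie, lie_lie_delta_map_eq hf hperf hδ, sub_self]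
  rw [add_lie, lie_sub, lie_sub, hcross, sub_add_sub_cancel, hdiff]
end

section
/- Let R be a commutative ring containing 1/2, L a perfect Lie algebra over R, f : L → L' a triple homomorphism such that the enveloping Lie algebra M of f(L) is centerless and indecomposable (cannot be written as a direct sum of two nontrivial ideals). Then f is either a Lie algebra homomorphism or an anti-homomorphism. -/
/-!
The defects `f ⁅x, y⁆ - ⁅f x, f y⁆` and `f ⁅x, y⁆ + ⁅f x, f y⁆` span ideals `I` and `J` of the
Lie algebra `M` generated by `f L`, since bracketing with a generator `f w` turns a defect into
another defect. As `M` is centerless, `⁅f ⁅x, y⁆, f ⁅u, v⁆⁆ = ⁅⁅f x, f y⁆, ⁅f u, f v⁆⁆`, and this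
gives `⁅I, J⁆ = 0`. Because `2` is invertible and `L` is perfect, `f L ⊆ I + J`, so `M = I + J`;
then `I ∩ J` is central, hence zero, and indecomposability forces `I = 0` or `J = 0`.
-/

open LieAlgebra LieSubalgebra Set

section LieAlgebra

variable {R M : Type*} [CommRing R] [LieRing M] [LieAlgebra R M]

theorem eq_zero_of_lie_eq_zero_of_lieSpan_eq_top (hZ : center R M = ⊥) {t : Set M}
    (ht : lieSpan R M t = ⊤) {m : M} (hm : ∀ a ∈ t, ⁅m, a⁆ = 0) : m = 0 :=
  LieDerivation.injective_ad_of_center_eq_bot hZ <|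
    LieDerivation.ext_of_lieSpan_eq_top t ht fun a ha => by simp [hm a ha]

theorem Submodule.lie_mem_of_lieSpan_eq_top {N : Submodule R M} {t : Set M}
    (ht : LieSubalgebra.lieSpan R M t = ⊤) (hN : ∀ a ∈ t, ∀ n ∈ N, ⁅a, n⁆ ∈ N) (m : M) {n : M}
    (hn : n ∈ N) : ⁅m, n⁆ ∈ N := by
  have hm : m ∈ lieSpan R M t := ht ▸ LieSubalgebra.mem_top m
  induction hm using lieSpan_induction generalizing n with
  | mem a ha => exact hN a ha n hn
  | zero => simp
  | add a b _ _ ha hb => simpa only [add_lie] using N.add_mem (ha hn) (hb hn)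
  | smul c a _ ha => simpa only [smul_lie] using N.smul_mem c (ha hn)
  | lie a b _ _ ha hb => simpa only [lie_lie] using N.sub_mem (ha (hb hn)) (hb (ha hn))

theorem LieSubmodule.toSubmodule_lieSpan_eq_span {s t : Set M}
    (ht : LieSubalgebra.lieSpan R M t = ⊤)
    (hs : ∀ a ∈ t, ∀ x ∈ s, ⁅a, x⁆ ∈ Submodule.span R s) :
    (LieSubmodule.lieSpan R M s).toSubmodule = Submodule.span R s := by
  have hstab : ∀ a ∈ t, ∀ n ∈ Submodule.span R s, ⁅a, n⁆ ∈ Submodule.span R s := fun a ha _ hn =>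
    (Submodule.span_le (p := (Submodule.span R s).comap (LieModule.toEnd R M M a))).mpr
      (hs a ha) hn
  let N : LieIdeal R M :=
    { Submodule.span R s with
      lie_mem := Submodule.lie_mem_of_lieSpan_eq_top ht hstab _ }
  refine le_antisymm ?_ LieSubmodule.submodule_span_le_lieSpan
  exact (LieSubmodule.lieSpan_le (N := N)).mpr Submodule.subset_span

theorem lie_eq_zero_of_mem_span {s t : Set M} (hst : ∀ a ∈ s, ∀ b ∈ t, ⁅a, b⁆ = 0) {x y : M}
    (hx : x ∈ Submodule.span R s) (hy : y ∈ Submodule.span R t) : ⁅x, y⁆ = 0 := by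
  induction hx, hy using Submodule.span_induction₂ with
  | mem_mem a b ha hb => exact hst a ha b hb
  | zero_left => simp
  | zero_right => simp
  | add_left _ _ _ _ _ _ h₁ h₂ => simp [add_lie, h₁, h₂]
  | add_right _ _ _ _ _ _ h₁ h₂ => simp [lie_add, h₁, h₂]
  | smul_left _ _ _ _ _ h => simp [h]
  | smul_right _ _ _ _ _ h => simp [h]

theorem LieIdeal.inf_eq_bot_of_lie_eq_bot (hZ : center R M = ⊥) {I J : LieIdeal R M}
    (hIJ : ⁅I, J⁆ = ⊥) (hsup : I ⊔ J = ⊤) : I ⊓ J = ⊥ := by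
  have : ⁅(⊤ : LieIdeal R M), I ⊓ J⁆ = ⊥ := by
    refine eq_bot_iff.mpr ?_
    calc ⁅(⊤ : LieIdeal R M), I ⊓ J⁆ = ⁅I, I ⊓ J⁆ ⊔ ⁅J, I ⊓ J⁆ := by
          rw [← hsup, LieSubmodule.sup_lie]
      _ ≤ ⁅I, J⁆ ⊔ ⁅J, I⁆ := sup_le_sup (LieSubmodule.mono_lie_right I inf_le_right)
          (LieSubmodule.mono_lie_right J inf_le_left)
      _ = ⊥ := by rw [LieSubmodule.lie_comm J, hIJ, sup_idem]
  rw [← LieModule.le_max_triv_iff_bracket_eq_bot] at this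
  exact eq_bot_iff.mpr (hZ ▸ this)

end LieAlgebra

section TripleHom

variable {R L M : Type*} [CommRing R] [LieRing L] [LieAlgebra R L] [LieRing M] [LieAlgebra R M]

def IsLieTripleHom (f : L →ₗ[R] M) : Prop :=
  ∀ x y z : L, f ⁅x, ⁅y, z⁆⁆ = ⁅f x, ⁅f y, f z⁆⁆

variable (f : L →ₗ[R] M)

def homDefect (x y : L) : M := f ⁅x, y⁆ - ⁅f x, f y⁆

def antihomDefect (x y : L) : M := f ⁅x, y⁆ + ⁅f x, f y⁆

def homDefectIdeal : LieIdeal R M :=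
  LieSubmodule.lieSpan R M (range (Function.uncurry (homDefect f)))

def antihomDefectIdeal : LieIdeal R M :=
  LieSubmodule.lieSpan R M (range (Function.uncurry (antihomDefect f)))

theorem homDefectIdeal_eq_bot_iff :
    homDefectIdeal f = ⊥ ↔ ∀ x y : L, f ⁅x, y⁆ = ⁅f x, f y⁆ := by
  simp only [homDefectIdeal, LieSubmodule.lieSpan_eq_bot_iff, forall_mem_range, Prod.forall,
    Function.uncurry_apply_pair, homDefect, sub_eq_zero]

theorem antihomDefectIdeal_eq_bot_iff :
    antihomDefectIdeal f = ⊥ ↔ ∀ x y : L, f ⁅x, y⁆ = ⁅f y, f x⁆ := by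
  simp only [antihomDefectIdeal, LieSubmodule.lieSpan_eq_bot_iff, forall_mem_range, Prod.forall,
    Function.uncurry_apply_pair, antihomDefect, add_eq_zero_iff_eq_neg, lie_skew]

theorem map_lie_mem_homDefectIdeal_sup_antihomDefectIdeal [Invertible (2 : R)] (x y : L) :
    f ⁅x, y⁆ ∈ homDefectIdeal f ⊔ antihomDefectIdeal f := by
  have hsum : homDefect f x y + antihomDefect f x y = (2 : R) • f ⁅x, y⁆ := by
    rw [homDefect, antihomDefect, two_smul]; abel
  rw [← invOf_smul_smul (2 : R) (f ⁅x, y⁆), ← hsum]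
  exact Submodule.smul_mem _ _ <| add_mem
    (LieSubmodule.mem_sup_left <| LieSubmodule.subset_lieSpan ⟨(x, y), rfl⟩)
    (LieSubmodule.mem_sup_right <| LieSubmodule.subset_lieSpan ⟨(x, y), rfl⟩)

theorem homDefectIdeal_sup_antihomDefectIdeal_eq_top [Invertible (2 : R)]
    (hperf : ⁅(⊤ : LieIdeal R L), (⊤ : LieIdeal R L)⁆ = ⊤)
    (hspan : lieSpan R M (range f) = ⊤) :
    homDefectIdeal f ⊔ antihomDefectIdeal f = ⊤ := by
  set I := homDefectIdeal f ⊔ antihomDefectIdeal f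
  have hbrackets : (⁅(⊤ : LieIdeal R L), ⊤⁆ : LieIdeal R L).toSubmodule ≤
      I.toSubmodule.comap f := by
    rw [LieSubmodule.lieIdeal_oper_eq_linear_span', Submodule.span_le]
    rintro _ ⟨x, -, y, -, rfl⟩
    exact map_lie_mem_homDefectIdeal_sup_antihomDefectIdeal f x y
  have hrange : range f ⊆ I := by
    rintro _ ⟨z, rfl⟩
    exact hbrackets (by rw [hperf]; exact LieSubmodule.mem_top z)
  rw [eq_top_iff]
  intro m _
  exact (lieSpan_le (K := I.toLieSubalgebra)).mpr hrange (hspan ▸ LieSubalgebra.mem_top m)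

end TripleHom

namespace IsLieTripleHom

variable {R L M : Type*} [CommRing R] [LieRing L] [LieAlgebra R L] [LieRing M] [LieAlgebra R M]
  {f : L →ₗ[R] M} (hf : IsLieTripleHom f)
include hf

theorem codRestrict (K : LieSubalgebra R M) (hK : ∀ x, f x ∈ K) :
    IsLieTripleHom (M := K) (f.codRestrict K.toSubmodule hK) :=
  fun x y z => Subtype.ext (hf x y z)

theorem map_lie_lie_left (x y z : L) : f ⁅⁅x, y⁆, z⁆ = ⁅⁅f x, f y⁆, f z⁆ := by
  rw [← lie_skew ⁅x, y⁆ z, map_neg, hf, lie_skew]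

theorem lie_map_homDefect (w x y : L) : ⁅f w, homDefect f x y⁆ = homDefect f ⁅x, y⁆ w := by
  rw [homDefect, homDefect, hf.map_lie_lie_left, lie_sub, ← lie_skew (f w) (f ⁅x, y⁆),
    ← lie_skew (f w) ⁅f x, f y⁆]
  abel

theorem lie_map_antihomDefect (w x y : L) :
    ⁅f w, antihomDefect f x y⁆ = antihomDefect f w ⁅x, y⁆ := by
  rw [antihomDefect, antihomDefect, hf, lie_add]
  abel

section Generated

variable (hspan : lieSpan R M (range f) = ⊤)
include hspan

theorem toSubmodule_homDefectIdeal :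
    (homDefectIdeal f).toSubmodule = Submodule.span R (range (Function.uncurry (homDefect f))) :=
  LieSubmodule.toSubmodule_lieSpan_eq_span hspan <| by
    rintro _ ⟨w, rfl⟩ _ ⟨⟨x, y⟩, rfl⟩
    exact Submodule.subset_span ⟨(⁅x, y⁆, w), (hf.lie_map_homDefect w x y).symm⟩

theorem toSubmodule_antihomDefectIdeal :
    (antihomDefectIdeal f).toSubmodule =
      Submodule.span R (range (Function.uncurry (antihomDefect f))) :=
  LieSubmodule.toSubmodule_lieSpan_eq_span hspan <| by
    rintro _ ⟨w, rfl⟩ _ ⟨⟨x, y⟩, rfl⟩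
    exact Submodule.subset_span ⟨(w, ⁅x, y⁆), (hf.lie_map_antihomDefect w x y).symm⟩

variable (hZ : center R M = ⊥)
include hZ

theorem lie_map_lie_map_lie (x y u v : L) :
    ⁅f ⁅x, y⁆, f ⁅u, v⁆⁆ = ⁅⁅f x, f y⁆, ⁅f u, f v⁆⁆ := by
  have key : ∀ x y u v w : L,
      ⁅f ⁅x, y⁆, ⁅f ⁅u, v⁆, f w⁆⁆ = ⁅⁅f x, f y⁆, ⁅⁅f u, f v⁆, f w⁆⁆ := by
    intro x y u v w
    rw [← hf, hf.map_lie_lie_left, hf.map_lie_lie_left]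
  rw [← sub_eq_zero]
  refine eq_zero_of_lie_eq_zero_of_lieSpan_eq_top hZ hspan ?_
  rintro _ ⟨w, rfl⟩
  rw [sub_lie, lie_lie, lie_lie, key x y u v w, key u v x y w]
  abel

theorem lie_homDefect_antihomDefect (x y u v : L) :
    ⁅homDefect f x y, antihomDefect f u v⁆ = 0 := by
  have hmixed : ⁅f ⁅x, y⁆, ⁅f u, f v⁆⁆ = ⁅⁅f x, f y⁆, f ⁅u, v⁆⁆ := by
    rw [← hf, hf.map_lie_lie_left]
  rw [homDefect, antihomDefect, sub_lie, lie_add, lie_add, hf.lie_map_lie_map_lie hspan hZ, hmixed]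
  abel

theorem lie_homDefectIdeal_antihomDefectIdeal :
    ⁅homDefectIdeal f, antihomDefectIdeal f⁆ = ⊥ := by
  rw [LieSubmodule.lie_eq_bot_iff]
  intro d hd a ha
  rw [← LieSubmodule.mem_toSubmodule, hf.toSubmodule_homDefectIdeal hspan] at hd
  rw [← LieSubmodule.mem_toSubmodule, hf.toSubmodule_antihomDefectIdeal hspan] at ha
  refine lie_eq_zero_of_mem_span ?_ hd ha
  rintro _ ⟨⟨x, y⟩, rfl⟩ _ ⟨⟨u, v⟩, rfl⟩
  exact hf.lie_homDefect_antihomDefect hspan hZ x y u v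

theorem hom_or_antihom [Invertible (2 : R)]
    (hperf : ⁅(⊤ : LieIdeal R L), (⊤ : LieIdeal R L)⁆ = ⊤)
    (hindec : ∀ I J : LieIdeal R M, I ⊓ J = ⊥ → I ⊔ J = ⊤ → I = ⊥ ∨ J = ⊥) :
    (∀ x y : L, f ⁅x, y⁆ = ⁅f x, f y⁆) ∨ (∀ x y : L, f ⁅x, y⁆ = ⁅f y, f x⁆) := by
  have hsup := homDefectIdeal_sup_antihomDefectIdeal_eq_top f hperf hspan
  have hinf := LieIdeal.inf_eq_bot_of_lie_eq_bot hZ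
    (hf.lie_homDefectIdeal_antihomDefectIdeal hspan hZ) hsup
  rw [← homDefectIdeal_eq_bot_iff, ← antihomDefectIdeal_eq_bot_iff]
  exact hindec _ _ hinf hsup

end Generated

end IsLieTripleHom

/-- If `1/2 ∈ R`, `L` is perfect, and the enveloping Lie algebra `M` of the image of a triple
homomorphism `f` is centerless and indecomposable, then `f` is a homomorphism or an
anti-homomorphism. -/
theorem tripleHom_indecomposable (R L L' : Type*) [CommRing R]
    [LieRing L] [LieAlgebra R L] [LieRing L'] [LieAlgebra R L']
    [Invertible (2 : R)]
    (f : L →ₗ[R] L')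
    (hf : ∀ x y z : L, f ⁅x, ⁅y, z⁆⁆ = ⁅f x, ⁅f y, f z⁆⁆)
    (hperf : ⁅(⊤ : LieIdeal R L), (⊤ : LieIdeal R L)⁆ = ⊤)
    (hZ : LieAlgebra.center R ↥(LieSubalgebra.lieSpan R L' (Set.range f)) = ⊥)
    (hindec : ∀ I J : LieIdeal R ↥(LieSubalgebra.lieSpan R L' (Set.range f)),
      I ⊓ J = ⊥ → I ⊔ J = ⊤ → I = ⊥ ∨ J = ⊥) :
    (∀ x y : L, f ⁅x, y⁆ = ⁅f x, f y⁆) ∨ (∀ x y : L, f ⁅x, y⁆ = ⁅f y, f x⁆) := by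
  set M := lieSpan R L' (range f)
  have hfM : ∀ x, f x ∈ M := fun x => subset_lieSpan ⟨x, rfl⟩
  set g := f.codRestrict M.toSubmodule hfM
  have hrange : range g = ((↑) : M → L') ⁻¹' range f := by
    ext m
    exact ⟨fun ⟨x, hx⟩ => ⟨x, congrArg Subtype.val hx⟩, fun ⟨x, hx⟩ => ⟨x, Subtype.ext hx⟩⟩
  have hspan : lieSpan R M (range g) = ⊤ := hrange ▸ lieSpan_lieSpan_coe_preimage
  exact ((IsLieTripleHom.codRestrict hf M hfM).hom_or_antihom hspan hZ hperf hindec).imp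
    (fun h x y => congrArg Subtype.val (h x y)) (fun h x y => congrArg Subtype.val (h x y))
end

section
/- Let R be a commutative ring in which 2 is invertible, L a perfect Lie algebra over R, and f : L → L' a triple homomorphism whose enveloping Lie algebra M of f(L) is centerless and decomposes as a direct sum of indecomposable ideals. Then f = f₁ + f₂ where f₁ is a Lie algebra homomorphism, f₂ is an anti-homomorphism, f₁(L) and f₂(L) lie in ideals of M with trivial intersection (i.e., f is either a homomorphism, an anti-homomorphism, or a direct sum of a homomorphism and an anti-homomorphism). -/
/-!
An element of the centerless Lie algebra `M = lieSpan (range f)` is determined by its brackets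
with `f(L)`. Since `L` is perfect and `⁅⁅f x, f y⁆, f z⁆ = f ⁅⁅x, y⁆, z⁆`, every `u : L` acts on
`f(L)` as some `g u ∈ M`, i.e. `⁅g u, f z⁆ = f ⁅u, z⁆`; uniqueness makes `g` linear with
`g ⁅x, y⁆ = ⁅f x, f y⁆ = ⁅g x, g y⁆`. Then `(f + g)/2` is a homomorphism and `(f - g)/2` an
anti-homomorphism with commuting images. Their ranges are stable under brackets with `f(L)`,
hence cut out ideals of `M`, and these meet in elements commuting with `f(L)`, i.e. in `0`.
-/

open LieSubalgebra Set

namespace LieSubalgebra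

variable {R L : Type*} [CommRing R] [LieRing L] [LieAlgebra R L] {s : Set L}

theorem lie_eq_zero_of_mem_lieSpan {m n : L} (hm : ∀ x ∈ s, ⁅m, x⁆ = 0)
    (hn : n ∈ lieSpan R L s) : ⁅m, n⁆ = 0 := by
  induction hn using lieSpan_induction with
  | mem x hx => exact hm x hx
  | zero => exact lie_zero m
  | add x y _ _ hx hy => rw [lie_add, hx, hy, add_zero]
  | smul a x _ hx => rw [lie_smul, hx, smul_zero]
  | lie x y _ _ hx hy => rw [leibniz_lie, hx, hy, zero_lie, lie_zero, add_zero]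

theorem eq_zero_of_forall_lie_eq_zero (hZ : LieAlgebra.center R (lieSpan R L s) = ⊥) {m : L}
    (hm : m ∈ lieSpan R L s) (h : ∀ x ∈ s, ⁅m, x⁆ = 0) : m = 0 := by
  have hcenter : (⟨m, hm⟩ : lieSpan R L s) ∈ LieAlgebra.center R (lieSpan R L s) := by
    rw [LieModule.mem_maxTrivSubmodule]
    intro n
    ext
    change ⁅(n : L), m⁆ = 0
    rw [← lie_skew, lie_eq_zero_of_mem_lieSpan h n.2, neg_zero]
  rw [hZ, LieSubmodule.mem_bot] at hcenter
  exact congrArg Subtype.val hcenter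

theorem lie_mem_of_mem_lieSpan {N : Submodule R L} (hN : ∀ x ∈ s, ∀ n ∈ N, ⁅x, n⁆ ∈ N)
    {m : L} (hm : m ∈ lieSpan R L s) : ∀ n ∈ N, ⁅m, n⁆ ∈ N := by
  induction hm using lieSpan_induction with
  | mem x hx => exact hN x hx
  | zero => simp
  | add x y _ _ hx hy => exact fun n hn => by rw [add_lie]; exact N.add_mem (hx n hn) (hy n hn)
  | smul a x _ hx => exact fun n hn => by rw [smul_lie]; exact N.smul_mem a (hx n hn)
  | lie x y _ _ hx hy =>
    exact fun n hn => by rw [lie_lie]; exact N.sub_mem (hx _ (hy n hn)) (hy _ (hx n hn))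

def lieIdealOfLieMem (N : Submodule R L) (hN : ∀ x ∈ s, ∀ n ∈ N, ⁅x, n⁆ ∈ N) :
    LieIdeal R (lieSpan R L s) where
  toSubmodule := N.comap (lieSpan R L s).toSubmodule.subtype
  lie_mem {m _} hn := lie_mem_of_mem_lieSpan hN m.2 _ hn

theorem lieIdealOfLieMem_inf_eq_bot (hZ : LieAlgebra.center R (lieSpan R L s) = ⊥)
    {N₁ N₂ : Submodule R L} (h₁ : ∀ x ∈ s, ∀ n ∈ N₁, ⁅x, n⁆ ∈ N₁)
    (h₂ : ∀ x ∈ s, ∀ n ∈ N₂, ⁅x, n⁆ ∈ N₂) (hs : s ⊆ (N₁ ⊔ N₂ : Submodule R L))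
    (h : ∀ a ∈ N₁, ∀ b ∈ N₂, ⁅a, b⁆ = 0) :
    lieIdealOfLieMem N₁ h₁ ⊓ lieIdealOfLieMem N₂ h₂ = ⊥ := by
  rw [LieSubmodule.eq_bot_iff]
  rintro m ⟨hm₁ : (m : L) ∈ N₁, hm₂ : (m : L) ∈ N₂⟩
  ext
  refine eq_zero_of_forall_lie_eq_zero hZ m.2 fun x hx => ?_
  obtain ⟨a, ha, b, hb, rfl⟩ := Submodule.mem_sup.mp (hs hx)
  rw [lie_add, ← lie_skew, h a ha _ hm₂, h _ hm₁ b hb, neg_zero, add_zero]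

end LieSubalgebra

section Companion

variable {R L L' : Type*} [CommRing R] [LieRing L] [LieAlgebra R L] [LieRing L'] [LieAlgebra R L']

/-- For `f = p + q` and `g = p - q` these identities say exactly that `p` is a homomorphism,
`q` an anti-homomorphism, and `⁅p x, q y⁆ = 0`. -/
structure IsLieCompanion (f g : L →ₗ[R] L') : Prop where
  lie_apply_eq : ∀ x y, ⁅g x, f y⁆ = f ⁅x, y⁆
  map_lie : ∀ x y, g ⁅x, y⁆ = ⁅g x, g y⁆
  apply_lie_apply : ∀ x y, ⁅f x, f y⁆ = g ⁅x, y⁆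

theorem IsLieCompanion.apply_lie_eq {f g : L →ₗ[R] L'} (hc : IsLieCompanion f g) (x y : L) :
    ⁅f x, g y⁆ = f ⁅x, y⁆ := by
  rw [← lie_skew, hc.lie_apply_eq, ← map_neg, lie_skew]

variable [Invertible (2 : R)]

def homPart (f g : L →ₗ[R] L') : L →ₗ[R] L' := ⅟(2 : R) • (f + g)

def antiHomPart (f g : L →ₗ[R] L') : L →ₗ[R] L' := ⅟(2 : R) • (f - g)

theorem homPart_apply_add_antiHomPart_apply (f g : L →ₗ[R] L') (x : L) :
    homPart f g x + antiHomPart f g x = f x := by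
  have h : (f x + g x) + (f x - g x) = (2 : R) • f x := by rw [two_smul]; abel
  simp only [homPart, antiHomPart, LinearMap.smul_apply, LinearMap.add_apply,
    LinearMap.sub_apply, ← smul_add, h, smul_smul, invOf_mul_self, one_smul]

theorem invOf_two_smul_lie_invOf_two_smul {a b c : L'} (h : ⁅a, b⁆ = (2 : R) • c) :
    ⁅(⅟(2 : R)) • a, (⅟(2 : R)) • b⁆ = (⅟(2 : R)) • c := by
  rw [smul_lie, lie_smul, h, smul_smul, smul_smul, mul_assoc, invOf_mul_self, mul_one]

namespace IsLieCompanion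

variable {f g : L →ₗ[R] L'}

theorem homPart_lie (hc : IsLieCompanion f g) (x y : L) :
    homPart f g ⁅x, y⁆ = ⁅homPart f g x, homPart f g y⁆ := by
  refine (invOf_two_smul_lie_invOf_two_smul ?_).symm
  simp only [LinearMap.add_apply, lie_add, add_lie, hc.apply_lie_eq, hc.lie_apply_eq,
    hc.apply_lie_apply, ← hc.map_lie, two_smul]
  abel

theorem antiHomPart_lie (hc : IsLieCompanion f g) (x y : L) :
    antiHomPart f g ⁅x, y⁆ = ⁅antiHomPart f g y, antiHomPart f g x⁆ := by
  refine (invOf_two_smul_lie_invOf_two_smul ?_).symm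
  simp only [LinearMap.sub_apply, lie_sub, sub_lie, hc.apply_lie_eq, hc.lie_apply_eq,
    hc.apply_lie_apply, ← hc.map_lie, two_smul, ← lie_skew x y, map_neg]
  abel

theorem homPart_lie_antiHomPart (hc : IsLieCompanion f g) (x y : L) :
    ⁅homPart f g x, antiHomPart f g y⁆ = 0 := by
  have h : ⁅f x + g x, f y - g y⁆ = (2 : R) • 0 := by
    simp only [lie_sub, add_lie, hc.apply_lie_eq, hc.lie_apply_eq, hc.apply_lie_apply,
      ← hc.map_lie, smul_zero]
    abel
  exact (invOf_two_smul_lie_invOf_two_smul h).trans (smul_zero _)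

theorem lie_mem_range_homPart (hc : IsLieCompanion f g) :
    ∀ x ∈ range f, ∀ n ∈ LinearMap.range (homPart f g),
      ⁅x, n⁆ ∈ LinearMap.range (homPart f g) := by
  rintro _ ⟨x, rfl⟩ _ ⟨y, rfl⟩
  refine ⟨⁅x, y⁆, ?_⟩
  rw [← homPart_apply_add_antiHomPart_apply f g x, add_lie, ← lie_skew (antiHomPart f g x),
    hc.homPart_lie_antiHomPart, neg_zero, add_zero, hc.homPart_lie]

theorem lie_mem_range_antiHomPart (hc : IsLieCompanion f g) :
    ∀ x ∈ range f, ∀ n ∈ LinearMap.range (antiHomPart f g),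
      ⁅x, n⁆ ∈ LinearMap.range (antiHomPart f g) := by
  rintro _ ⟨x, rfl⟩ _ ⟨y, rfl⟩
  refine ⟨⁅y, x⁆, ?_⟩
  rw [← homPart_apply_add_antiHomPart_apply f g x, add_lie, hc.homPart_lie_antiHomPart,
    zero_add, hc.antiHomPart_lie]

theorem lie_eq_zero_of_mem_range (hc : IsLieCompanion f g) :
    ∀ a ∈ LinearMap.range (homPart f g), ∀ b ∈ LinearMap.range (antiHomPart f g),
      ⁅a, b⁆ = 0 := by
  rintro _ ⟨x, rfl⟩ _ ⟨y, rfl⟩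
  exact hc.homPart_lie_antiHomPart x y

end IsLieCompanion

theorem range_subset_range_homPart_sup_range_antiHomPart (f g : L →ₗ[R] L') :
    range f ⊆ (LinearMap.range (homPart f g) ⊔ LinearMap.range (antiHomPart f g) :
      Submodule R L') := by
  rintro _ ⟨x, rfl⟩
  rw [← homPart_apply_add_antiHomPart_apply f g x]
  exact Submodule.add_mem_sup ⟨x, rfl⟩ ⟨x, rfl⟩

end Companion

section TripleHom

variable {R L L' : Type*} [CommRing R] [LieRing L] [LieAlgebra R L] [LieRing L'] [LieAlgebra R L']

def IsTripleHom (f : L →ₗ[R] L') : Prop :=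
  ∀ x y z : L, f ⁅x, ⁅y, z⁆⁆ = ⁅f x, ⁅f y, f z⁆⁆

variable {f : L →ₗ[R] L'}

theorem IsTripleHom.lie_lie_apply (hf : IsTripleHom f) (x y z : L) :
    ⁅⁅f x, f y⁆, f z⁆ = f ⁅⁅x, y⁆, z⁆ := by
  rw [← lie_skew, ← hf, ← map_neg, lie_skew]

theorem eq_of_forall_lie_apply_eq (hZ : LieAlgebra.center R (lieSpan R L' (range f)) = ⊥)
    {m m' : L'} (hm : m ∈ lieSpan R L' (range f)) (hm' : m' ∈ lieSpan R L' (range f))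
    (h : ∀ z, ⁅m, f z⁆ = ⁅m', f z⁆) : m = m' :=
  sub_eq_zero.mp <| eq_zero_of_forall_lie_eq_zero hZ (sub_mem hm hm') <|
    forall_mem_range.mpr fun z => by rw [sub_lie, h, sub_self]

theorem IsTripleHom.exists_mem_lieSpan_lie_apply_eq (hf : IsTripleHom f)
    (hperf : ⁅(⊤ : LieIdeal R L), (⊤ : LieIdeal R L)⁆ = ⊤) (u : L) :
    ∃ m ∈ lieSpan R L' (range f), ∀ z, ⁅m, f z⁆ = f ⁅u, z⁆ := by
  have hu : u ∈ Submodule.span R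
      {⁅x, y⁆ | (x ∈ (⊤ : LieIdeal R L)) (y ∈ (⊤ : LieIdeal R L))} := by
    rw [← LieSubmodule.lieIdeal_oper_eq_linear_span', hperf]
    exact Submodule.mem_top
  induction hu using Submodule.span_induction with
  | mem _ hxy =>
    obtain ⟨x, -, y, -, rfl⟩ := hxy
    exact ⟨⁅f x, f y⁆, lie_mem _ (subset_lieSpan ⟨x, rfl⟩) (subset_lieSpan ⟨y, rfl⟩),
      hf.lie_lie_apply x y⟩
  | zero => exact ⟨0, zero_mem _, fun z => by simp⟩
  | add a b _ _ ha hb =>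
    obtain ⟨m₁, hm₁, h₁⟩ := ha
    obtain ⟨m₂, hm₂, h₂⟩ := hb
    exact ⟨m₁ + m₂, add_mem hm₁ hm₂, fun z => by rw [add_lie, h₁, h₂, ← map_add, ← add_lie]⟩
  | smul c a _ ha =>
    obtain ⟨m, hm, h⟩ := ha
    exact ⟨c • m, (lieSpan R L' (range f)).smul_mem c hm,
      fun z => by rw [smul_lie, h, ← map_smul, ← smul_lie]⟩

theorem IsTripleHom.exists_isLieCompanion (hf : IsTripleHom f)
    (hperf : ⁅(⊤ : LieIdeal R L), (⊤ : LieIdeal R L)⁆ = ⊤)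
    (hZ : LieAlgebra.center R (lieSpan R L' (range f)) = ⊥) :
    ∃ g : L →ₗ[R] L', (∀ u, g u ∈ lieSpan R L' (range f)) ∧ IsLieCompanion f g := by
  choose g hgM hg using hf.exists_mem_lieSpan_lie_apply_eq hperf
  have eq_g {u : L} {m : L'} (hm : m ∈ lieSpan R L' (range f))
      (h : ∀ z, ⁅m, f z⁆ = f ⁅u, z⁆) : g u = m :=
    eq_of_forall_lie_apply_eq hZ (hgM u) hm fun z => (hg u z).trans (h z).symm
  have map_lie (x y : L) : g ⁅x, y⁆ = ⁅g x, g y⁆ := by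
    refine eq_g (lie_mem _ (hgM x) (hgM y)) fun z => ?_
    rw [lie_lie, hg y z, hg x z, hg x, hg y, ← map_sub, ← lie_lie]
  have apply_lie_apply (x y : L) : ⁅f x, f y⁆ = g ⁅x, y⁆ :=
    (eq_g (lie_mem _ (subset_lieSpan ⟨x, rfl⟩) (subset_lieSpan ⟨y, rfl⟩))
      (hf.lie_lie_apply x y)).symm
  let G : L →ₗ[R] L' :=
    { toFun := g
      map_add' := fun u v => eq_g (add_mem (hgM u) (hgM v)) fun z => by
        rw [add_lie, hg, hg, ← map_add, ← add_lie]
      map_smul' := fun c u => eq_g ((lieSpan R L' (range f)).smul_mem c (hgM u)) fun z => by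
        rw [smul_lie, hg, ← map_smul, ← smul_lie, RingHom.id_apply] }
  exact ⟨G, hgM, hg, map_lie, apply_lie_apply⟩

end TripleHom

theorem tripleHom_decomposition_general (R L L' : Type*) [CommRing R]
    [LieRing L] [LieAlgebra R L] [LieRing L'] [LieAlgebra R L']
    [Invertible (2 : R)]
    (f : L →ₗ[R] L')
    (hf : ∀ x y z : L, f ⁅x, ⁅y, z⁆⁆ = ⁅f x, ⁅f y, f z⁆⁆)
    (hperf : ⁅(⊤ : LieIdeal R L), (⊤ : LieIdeal R L)⁆ = ⊤)
    (hZ : LieAlgebra.center R ↥(LieSubalgebra.lieSpan R L' (Set.range f)) = ⊥) :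
    ∃ (f₁ f₂ : L →ₗ[R] L')
      (I₁ I₂ : LieIdeal R ↥(LieSubalgebra.lieSpan R L' (Set.range f))),
      f = f₁ + f₂ ∧
      (∀ x y : L, f₁ ⁅x, y⁆ = ⁅f₁ x, f₁ y⁆) ∧
      (∀ x y : L, f₂ ⁅x, y⁆ = ⁅f₂ y, f₂ x⁆) ∧
      I₁ ⊓ I₂ = ⊥ ∧
      (∀ x : L, ∃ h : f₁ x ∈ LieSubalgebra.lieSpan R L' (Set.range f),
        (⟨f₁ x, h⟩ : ↥(LieSubalgebra.lieSpan R L' (Set.range f))) ∈ I₁) ∧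
      (∀ x : L, ∃ h : f₂ x ∈ LieSubalgebra.lieSpan R L' (Set.range f),
        (⟨f₂ x, h⟩ : ↥(LieSubalgebra.lieSpan R L' (Set.range f))) ∈ I₂) := by
  obtain ⟨g, hgM, hc⟩ := IsTripleHom.exists_isLieCompanion hf hperf hZ
  have mem_span : ∀ x, f x ∈ lieSpan R L' (range f) := fun x => subset_lieSpan ⟨x, rfl⟩
  refine ⟨homPart f g, antiHomPart f g,
    lieIdealOfLieMem _ hc.lie_mem_range_homPart, lieIdealOfLieMem _ hc.lie_mem_range_antiHomPart,
    ?_, hc.homPart_lie, hc.antiHomPart_lie,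
    lieIdealOfLieMem_inf_eq_bot hZ _ _ (range_subset_range_homPart_sup_range_antiHomPart f g)
      hc.lie_eq_zero_of_mem_range,
    fun x => ⟨?_, ⟨x, rfl⟩⟩, fun x => ⟨?_, ⟨x, rfl⟩⟩⟩
  · ext x
    exact (homPart_apply_add_antiHomPart_apply f g x).symm
  · exact (lieSpan R L' (range f)).smul_mem _ (add_mem (mem_span x) (hgM x))
  · exact (lieSpan R L' (range f)).smul_mem _ (sub_mem (mem_span x) (hgM x))

/-- If `2` is invertible in `R`, `L` is perfect, and the enveloping Lie algebra `M` of the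
image of a triple homomorphism `f` is centerless and decomposes as a direct sum of
indecomposable ideals, then `f` is the direct sum of a homomorphism and an
anti-homomorphism. -/
theorem tripleHom_decomposition (R L L' : Type*) [CommRing R]
    [LieRing L] [LieAlgebra R L] [LieRing L'] [LieAlgebra R L']
    [Invertible (2 : R)]
    (f : L →ₗ[R] L')
    (hf : ∀ x y z : L, f ⁅x, ⁅y, z⁆⁆ = ⁅f x, ⁅f y, f z⁆⁆)
    (hperf : ⁅(⊤ : LieIdeal R L), (⊤ : LieIdeal R L)⁆ = ⊤)
    (hZ : LieAlgebra.center R ↥(LieSubalgebra.lieSpan R L' (Set.range f)) = ⊥)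
    (hdec : ∃ (s : ℕ) (M' : Fin s → LieIdeal R ↥(LieSubalgebra.lieSpan R L' (Set.range f))),
      iSupIndep M' ∧ (⨆ i, M' i) = ⊤ ∧
      ∀ i, ∀ I J : LieIdeal R ↥(M' i), I ⊓ J = ⊥ → I ⊔ J = ⊤ → I = ⊥ ∨ J = ⊥) :
    ∃ (f₁ f₂ : L →ₗ[R] L')
      (I₁ I₂ : LieIdeal R ↥(LieSubalgebra.lieSpan R L' (Set.range f))),
      f = f₁ + f₂ ∧
      (∀ x y : L, f₁ ⁅x, y⁆ = ⁅f₁ x, f₁ y⁆) ∧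
      (∀ x y : L, f₂ ⁅x, y⁆ = ⁅f₂ y, f₂ x⁆) ∧
      I₁ ⊓ I₂ = ⊥ ∧
      (∀ x : L, ∃ h : f₁ x ∈ LieSubalgebra.lieSpan R L' (Set.range f),
        (⟨f₁ x, h⟩ : ↥(LieSubalgebra.lieSpan R L' (Set.range f))) ∈ I₁) ∧
      (∀ x : L, ∃ h : f₂ x ∈ LieSubalgebra.lieSpan R L' (Set.range f),
        (⟨f₂ x, h⟩ : ↥(LieSubalgebra.lieSpan R L' (Set.range f))) ∈ I₂) :=
  tripleHom_decomposition_general R L L' f hf hperf hZ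
end
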